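/- arXiv:2509.25899 — 10 statements merged into one kernel-verified Lean document; each statement's English description precedes it below -/
import Mathlib

section
/- Let α, γ : [0,∞) → ℝ be continuous and let B₁, B₂ : [0,T'] → ℝ be differentiable functions satisfying B_i'(t) = −1 − α(t)B_i(t) + (1/2)γ(t)B_i(t)² for all t ∈ [0,T'] and i = 1,2. Then for all 0 ≤ t ≤ T ≤ T', |B₁(t) − B₂(t)| ≤ |B₁(T) − B₂(T)| · exp( ∫_t^T ( |α(s)| + (1/2)|γ(s)|·|B₁(s) + B₂(s)| ) ds ). -/
open Set intervalIntegral Topology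

/-- Grönwall-type stability estimate for two solutions of the Riccati ODE
`B' = -1 - α t * B + (1/2) γ t * B²` on `[0, T']`. -/
theorem riccati_gronwall_estimate
    (α γ : ℝ → ℝ) (hα : ContinuousOn α (Ici 0)) (hγ : ContinuousOn γ (Ici 0))
    (T' : ℝ) (B₁ B₂ : ℝ → ℝ)
    (hB₁ : ∀ t ∈ Icc (0:ℝ) T',
      HasDerivWithinAt B₁ (-1 - α t * B₁ t + (1/2) * γ t * (B₁ t)^2) (Icc 0 T') t)
    (hB₂ : ∀ t ∈ Icc (0:ℝ) T',
      HasDerivWithinAt B₂ (-1 - α t * B₂ t + (1/2) * γ t * (B₂ t)^2) (Icc 0 T') t) :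
    ∀ t T : ℝ, 0 ≤ t → t ≤ T → T ≤ T' →
      |B₁ t - B₂ t| ≤ |B₁ T - B₂ T| *
        Real.exp (∫ s in t..T, (|α s| + (1/2) * |γ s| * |B₁ s + B₂ s|)) := by
  intro t T ht htT hTT'
  have hT'0 : (0:ℝ) ≤ T' := le_trans (le_trans ht htT) hTT'
  have hIccIci : Icc (0:ℝ) T' ⊆ Ici 0 := Icc_subset_Ici_self
  -- continuity of B₁, B₂ on Icc 0 T'
  have hB₁c : ContinuousOn B₁ (Icc 0 T') := fun x hx => (hB₁ x hx).continuousWithinAt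
  have hB₂c : ContinuousOn B₂ (Icc 0 T') := fun x hx => (hB₂ x hx).continuousWithinAt
  -- the coefficient c
  set c : ℝ → ℝ := fun s => -(α s) + (1/2) * γ s * (B₁ s + B₂ s) with hc_def
  have hcc : ContinuousOn c (Icc 0 T') := by
    apply ContinuousOn.add
    · exact ((hα.mono hIccIci).neg)
    · exact (continuousOn_const.mul (hγ.mono hIccIci)).mul (hB₁c.add hB₂c)
  -- extend c continuously to ℝ via projIcc
  set c' : ℝ → ℝ := fun s => c (projIcc 0 T' hT'0 s) with hc'_def
  have hc'cont : Continuous c' := by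
    have : Continuous ((Icc 0 T').restrict c ∘ projIcc 0 T' hT'0) :=
      (continuousOn_iff_continuous_restrict.1 hcc).comp continuous_projIcc
    exact this
  have hc'eq : ∀ s ∈ Icc (0:ℝ) T', c' s = c s := by
    intro s hs
    simp [hc'_def, projIcc_of_mem hT'0 hs]
  -- antiderivative of c'
  set I : ℝ → ℝ := fun u => ∫ s in (0:ℝ)..u, c' s with hI_def
  have hI : ∀ x : ℝ, HasDerivAt I (c' x) x := by
    intro x
    exact intervalIntegral.integral_hasDerivAt_right (hc'cont.intervalIntegrable _ _)
      (hc'cont.stronglyMeasurableAtFilter _ _) hc'cont.continuousAt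
  -- the function φ = (B₁ - B₂) * exp(-I) has zero derivative within Icc 0 T'
  set φ : ℝ → ℝ := fun x => (B₁ x - B₂ x) * Real.exp (-(I x)) with hφ_def
  have hφderiv : ∀ x ∈ Icc (0:ℝ) T', HasDerivWithinAt φ 0 (Icc 0 T') x := by
    intro x hx
    have hD : HasDerivWithinAt (fun y => B₁ y - B₂ y) (c x * (B₁ x - B₂ x)) (Icc 0 T') x := by
      have := (hB₁ x hx).sub (hB₂ x hx)
      refine this.congr_deriv ?_
      simp only [hc_def]
      ring
    have hE : HasDerivWithinAt (fun y => Real.exp (-(I y))) (-(c x) * Real.exp (-(I x)))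
        (Icc 0 T') x := by
      have h1 : HasDerivAt (fun y => Real.exp (-(I y))) (Real.exp (-(I x)) * (-(c' x))) x :=
        (Real.hasDerivAt_exp _).comp x ((hI x).neg)
      have := h1.hasDerivWithinAt (s := Icc 0 T')
      refine this.congr_deriv ?_
      rw [hc'eq x hx]; ring
    have := hD.mul hE
    refine this.congr_deriv ?_
    ring
  have hφcont : ContinuousOn φ (Icc 0 T') := fun x hx => (hφderiv x hx).continuousWithinAt
  -- constancy on Icc t T
  have hsub : Icc t T ⊆ Icc 0 T' := Icc_subset_Icc ht hTT'
  have hconst : φ T = φ t := by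
    apply constant_of_has_deriv_right_zero (hφcont.mono hsub)
    · intro x hx
      have hx' : x ∈ Icc (0:ℝ) T' := hsub (Ico_subset_Icc_self hx)
      have h1 : HasDerivWithinAt φ 0 (Icc x T') x :=
        (hφderiv x hx').mono (Icc_subset_Icc (hx'.1) le_rfl)
      have h2 : 𝓝[Icc x T'] x = 𝓝[≥] x :=
        nhdsWithin_Icc_eq_nhdsGE (lt_of_lt_of_le hx.2 hTT')
      rw [HasDerivWithinAt, h2] at h1
      exact h1
    · exact right_mem_Icc.2 htT
  -- deduce the exact solution formula
  have hexp : ∀ x, Real.exp (-(I x)) > 0 := fun x => Real.exp_pos _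
  have hDt : B₁ t - B₂ t = (B₁ T - B₂ T) * Real.exp (-(∫ s in t..T, c' s)) := by
    have h : (B₁ T - B₂ T) * Real.exp (-(I T)) = (B₁ t - B₂ t) * Real.exp (-(I t)) := hconst
    have hint : I T - I t = ∫ s in t..T, c' s := by
      simp only [hI_def]
      exact intervalIntegral.integral_interval_sub_left
        (hc'cont.intervalIntegrable (μ := MeasureTheory.volume) _ _)
        (hc'cont.intervalIntegrable (μ := MeasureTheory.volume) _ _)
    have := congrArg (fun y => y * Real.exp (I t)) h
    simp only [mul_assoc, ← Real.exp_add] at this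
    have h1 : -(I T) + I t = -(∫ s in t..T, c' s) := by rw [← hint]; ring
    rw [h1] at this
    simpa using this.symm
  -- bound the integral
  have hintle : -(∫ s in t..T, c' s) ≤ ∫ s in t..T, (|α s| + (1/2) * |γ s| * |B₁ s + B₂ s|) := by
    have hicc : Icc t T ⊆ Icc 0 T' := hsub
    have hgcont : ContinuousOn (fun s => |α s| + (1/2) * |γ s| * |B₁ s + B₂ s|) (Icc 0 T') := by
      apply ContinuousOn.add
      · exact (hα.mono hIccIci).abs
      · exact (continuousOn_const.mul (hγ.mono hIccIci).abs).mul (hB₁c.add hB₂c).abs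
    rw [← intervalIntegral.integral_neg]
    apply intervalIntegral.integral_mono_on htT
    · exact (hc'cont.intervalIntegrable _ _).neg
    · apply ContinuousOn.intervalIntegrable
      rw [uIcc_of_le htT]
      exact hgcont.mono hicc
    · intro s hs
      have hs' : s ∈ Icc (0:ℝ) T' := hicc hs
      rw [hc'eq s hs']
      have : |c s| ≤ |α s| + (1/2) * |γ s| * |B₁ s + B₂ s| := by
        calc |c s| ≤ |-(α s)| + |(1/2) * γ s * (B₁ s + B₂ s)| := abs_add_le _ _
          _ = |α s| + (1/2) * |γ s| * |B₁ s + B₂ s| := by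
              rw [abs_neg, abs_mul, abs_mul]
              norm_num
      calc -(c s) ≤ |c s| := neg_le_abs _
        _ ≤ _ := this
  calc |B₁ t - B₂ t| = |B₁ T - B₂ T| * Real.exp (-(∫ s in t..T, c' s)) := by
        rw [hDt, abs_mul, abs_of_pos (Real.exp_pos _)]
    _ ≤ |B₁ T - B₂ T| * Real.exp (∫ s in t..T, (|α s| + (1/2) * |γ s| * |B₁ s + B₂ s|)) := by
        apply mul_le_mul_of_nonneg_left (Real.exp_le_exp.2 hintle) (abs_nonneg _)
end

section
/- Let λ > 0, let ν be an atomless probability measure on ℝ, and for h > 0 let S_h = Σ_{i=1}^{N_h} X_i be a compound Poisson random variable with N_h ~ Poisson(λh) and (X_i)_{i≥1} i.i.d. with law ν, independent of N_h (with S_h = 0 when N_h = 0). Then for every c > 0, lim_{h→0+} P(S_h ≥ c)/h = λ·ν([c,∞)) = λ(1 − F(c)), where F is the cumulative distribution function of ν. -/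
open MeasureTheory ProbabilityTheory Set Filter Topology
open scoped ENNReal NNReal

/-- The law of a compound Poisson random variable `S = Σ_{i=1}^N X_i` with
`N ~ Poisson(m)` and `(X_i)` i.i.d. with law `ν`, independent of `N`. -/
noncomputable def compoundPoissonLaw (m : ℝ) (ν : Measure ℝ) : Measure ℝ :=
  (poissonMeasure m.toNNReal).bind
    (fun n => Measure.map (fun x : Fin n → ℝ => ∑ i, x i) (Measure.pi fun _ => ν))

lemma cpl_apply (m : ℝ) (ν : Measure ℝ) [IsProbabilityMeasure ν] {s : Set ℝ}
    (hs : MeasurableSet s) :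
    compoundPoissonLaw m ν s =
      ∑' n : ℕ, poissonPMF m.toNNReal n *
        (Measure.map (fun x : Fin n → ℝ => ∑ i, x i) (Measure.pi fun _ => ν)) s := by
  rw [compoundPoissonLaw, Measure.bind_apply hs (measurable_of_countable _).aemeasurable,
    lintegral_countable']
  refine tsum_congr fun n => ?_
  rw [poissonMeasure_singleton, ← poissonPMFReal_ofReal_eq_poissonPMF, poissonPMFReal, mul_comm]

lemma map_sum_zero (ν : Measure ℝ) [IsProbabilityMeasure ν] (c : ℝ) (hc : 0 < c) :
    (Measure.map (fun x : Fin 0 → ℝ => ∑ i, x i) (Measure.pi fun _ => ν)) (Ici c) = 0 := by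
  have : (fun x : Fin 0 → ℝ => ∑ i, x i) = fun _ => (0 : ℝ) := by
    funext x; simp
  rw [this, Measure.map_const]
  simp [Measure.dirac_apply' _ measurableSet_Ici, indicator, not_le.2 hc]

lemma map_sum_one (ν : Measure ℝ) [IsProbabilityMeasure ν] :
    (Measure.map (fun x : Fin 1 → ℝ => ∑ i, x i) (Measure.pi fun _ => ν)) = ν := by
  have : (fun x : Fin 1 → ℝ => ∑ i, x i) = ⇑(MeasurableEquiv.funUnique (Fin 1) ℝ) := by
    funext x
    simp [MeasurableEquiv.funUnique, Fin.sum_univ_one]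
  rw [this]; exact (measurePreserving_funUnique ν (Fin 1)).map_eq

instance mapSumProb (ν : Measure ℝ) [IsProbabilityMeasure ν] (n : ℕ) :
    IsProbabilityMeasure
      (Measure.map (fun x : Fin n → ℝ => ∑ i, x i) (Measure.pi fun _ => ν)) :=
  Measure.isProbabilityMeasure_map
    ((Finset.measurable_sum Finset.univ fun i _ => measurable_pi_apply i).aemeasurable)

lemma poisson_tail_le (r : ℝ≥0) :
    (∑' n : ℕ, (poissonPMF r (n + 2) : ℝ≥0∞)) ≤ ENNReal.ofReal ((r : ℝ) ^ 2 / 2) := by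
  have hterm : ∀ n : ℕ, (poissonPMF r (n + 2) : ℝ≥0∞) ≤
      ENNReal.ofReal ((r : ℝ) ^ 2 / 2) * poissonPMF r n := by
    intro n
    show ENNReal.ofReal (poissonPMFReal r (n + 2)) ≤
      ENNReal.ofReal ((r : ℝ) ^ 2 / 2) * ENNReal.ofReal (poissonPMFReal r n)
    rw [← ENNReal.ofReal_mul (by positivity)]
    refine ENNReal.ofReal_le_ofReal ?_
    unfold poissonPMFReal
    have hfac : (2 : ℝ) * (n.factorial) ≤ (((n+2).factorial) : ℝ) := by
      have h1 : 2 * (n.factorial) ≤ ((n+2).factorial) := by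
        rw [Nat.factorial_succ, Nat.factorial_succ]
        have h2 : 2 ≤ (n + 1 + 1) * (n + 1) := by nlinarith
        calc 2 * n.factorial ≤ ((n + 1 + 1) * (n + 1)) * n.factorial :=
              Nat.mul_le_mul_right _ h2
          _ = (n + 1 + 1) * ((n + 1) * n.factorial) := by ring
      exact_mod_cast h1
    have h2 : ((r : ℝ) ^ 2 / 2) * (Real.exp (-(r : ℝ)) * (r : ℝ) ^ n / (n.factorial)) =
        Real.exp (-(r : ℝ)) * (r : ℝ) ^ (n + 2) / (2 * (n.factorial)) := by
      have hn : (0 : ℝ) < (n.factorial) := by exact_mod_cast Nat.factorial_pos n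
      field_simp
      ring
    rw [h2]
    have hd : (0 : ℝ) < 2 * (n.factorial) := by positivity
    exact div_le_div_of_nonneg_left (by positivity) hd hfac
  have h1 : (∑' n : ℕ, (poissonPMF r (n + 2) : ℝ≥0∞)) ≤
      ∑' n : ℕ, ENNReal.ofReal ((r : ℝ) ^ 2 / 2) * poissonPMF r n :=
    ENNReal.tsum_le_tsum hterm
  have h2 : (∑' n : ℕ, ENNReal.ofReal ((r : ℝ) ^ 2 / 2) * poissonPMF r n) =
      ENNReal.ofReal ((r : ℝ) ^ 2 / 2) := by
    rw [ENNReal.tsum_mul_left, (poissonPMF r).tsum_coe, mul_one]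
  exact h1.trans h2.le

lemma tsum_shift_two (f : ℕ → ℝ≥0∞) :
    (∑' n, f n) = f 0 + f 1 + ∑' n, f (n + 2) := by
  rw [tsum_eq_zero_add' ENNReal.summable, tsum_eq_zero_add' ENNReal.summable, ← add_assoc]

lemma cpl_lower (m : ℝ) (ν : Measure ℝ) [IsProbabilityMeasure ν] (c : ℝ) (hc : 0 < c) :
    (poissonPMF m.toNNReal 1 : ℝ≥0∞) * ν (Ici c) ≤ compoundPoissonLaw m ν (Ici c) := by
  rw [cpl_apply m ν measurableSet_Ici]
  have := ENNReal.le_tsum (f := fun n : ℕ => (poissonPMF m.toNNReal n : ℝ≥0∞) *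
    (Measure.map (fun x : Fin n → ℝ => ∑ i, x i) (Measure.pi fun _ => ν)) (Ici c)) 1
  rwa [map_sum_one ν] at this

lemma cpl_upper (m : ℝ) (ν : Measure ℝ) [IsProbabilityMeasure ν] (c : ℝ) (hc : 0 < c) :
    compoundPoissonLaw m ν (Ici c) ≤
      (poissonPMF m.toNNReal 1 : ℝ≥0∞) * ν (Ici c) +
        ENNReal.ofReal ((m.toNNReal : ℝ) ^ 2 / 2) := by
  rw [cpl_apply m ν measurableSet_Ici]
  set f : ℕ → ℝ≥0∞ := fun n => (poissonPMF m.toNNReal n : ℝ≥0∞) *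
    (Measure.map (fun x : Fin n → ℝ => ∑ i, x i) (Measure.pi fun _ => ν)) (Ici c) with hf
  have h0 : f 0 = 0 := by
    simp only [hf, map_sum_zero ν c hc, mul_zero]
  rw [tsum_shift_two f, h0, zero_add]
  have h1 : f 1 = (poissonPMF m.toNNReal 1 : ℝ≥0∞) * ν (Ici c) := by
    rw [hf]; simp only [map_sum_one ν]
  have htail : (∑' n, f (n + 2)) ≤ ENNReal.ofReal ((m.toNNReal : ℝ) ^ 2 / 2) := by
    refine le_trans (ENNReal.tsum_le_tsum fun n => ?_) (poisson_tail_le m.toNNReal)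
    rw [hf]
    calc (poissonPMF m.toNNReal (n + 2) : ℝ≥0∞) *
          (Measure.map (fun x : Fin (n + 2) → ℝ => ∑ i, x i) (Measure.pi fun _ => ν)) (Ici c)
        ≤ (poissonPMF m.toNNReal (n + 2) : ℝ≥0∞) * 1 := by
          gcongr
          exact prob_le_one
      _ = poissonPMF m.toNNReal (n + 2) := mul_one _
  exact add_le_add h1.le htail

lemma cpl_bounds (ν : Measure ℝ) [IsProbabilityMeasure ν] (c : ℝ) (hc : 0 < c)
    (m : ℝ) (hm : 0 ≤ m) :
    Real.exp (-m) * m * (ν (Ici c)).toReal ≤ (compoundPoissonLaw m ν (Ici c)).toReal ∧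
    (compoundPoissonLaw m ν (Ici c)).toReal ≤
      Real.exp (-m) * m * (ν (Ici c)).toReal + m ^ 2 / 2 := by
  have hcoe : (m.toNNReal : ℝ) = m := Real.coe_toNNReal m hm
  have hA : ((poissonPMF m.toNNReal 1 : ℝ≥0∞) * ν (Ici c)) ≠ ⊤ :=
    ENNReal.mul_ne_top ((poissonPMF m.toNNReal).apply_ne_top 1) (measure_ne_top ν _)
  have hB : ENNReal.ofReal ((m.toNNReal : ℝ) ^ 2 / 2) ≠ ⊤ := ENNReal.ofReal_ne_top
  have hAB : ((poissonPMF m.toNNReal 1 : ℝ≥0∞) * ν (Ici c) +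
      ENNReal.ofReal ((m.toNNReal : ℝ) ^ 2 / 2)) ≠ ⊤ := ENNReal.add_ne_top.2 ⟨hA, hB⟩
  have hfin : compoundPoissonLaw m ν (Ici c) ≠ ⊤ :=
    ne_top_of_le_ne_top hAB (cpl_upper m ν c hc)
  have hAval : ((poissonPMF m.toNNReal 1 : ℝ≥0∞) * ν (Ici c)).toReal =
      Real.exp (-m) * m * (ν (Ici c)).toReal := by
    rw [ENNReal.toReal_mul]
    congr 1
    show (ENNReal.ofReal (poissonPMFReal m.toNNReal 1)).toReal = _
    rw [ENNReal.toReal_ofReal poissonPMFReal_nonneg]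
    simp [poissonPMFReal, hcoe]
  constructor
  · have := ENNReal.toReal_mono hfin (cpl_lower m ν c hc)
    rwa [hAval] at this
  · have := ENNReal.toReal_mono hAB (cpl_upper m ν c hc)
    rwa [ENNReal.toReal_add hA hB, hAval,
      ENNReal.toReal_ofReal (by positivity), hcoe] at this

/-- For a compound Poisson variable `S_h` with Poisson parameter `λ·h` and
atomless i.i.d. jump law `ν`, for every `c > 0`,
`P(S_h ≥ c)/h → λ·ν([c,∞)) = λ(1 − F(c))` as `h → 0+`, where `F` is the cdf of `ν`. -/
theorem compound_poisson_small_time_tail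
    (lam : ℝ) (hlam : 0 < lam) (ν : Measure ℝ) [IsProbabilityMeasure ν] [NullSingletonClass ν]
    (c : ℝ) (hc : 0 < c) :
    Tendsto (fun h : ℝ => ((compoundPoissonLaw (lam * h) ν) (Ici c)).toReal / h)
      (nhdsWithin 0 (Ioi 0)) (nhds (lam * (ν (Ici c)).toReal)) ∧
    lam * (ν (Ici c)).toReal = lam * (1 - cdf ν c) := by
  set q : ℝ := (ν (Ici c)).toReal with hq
  constructor
  · have t1 : Tendsto (fun h : ℝ => Real.exp (-(lam * h)) * lam * q)
        (nhdsWithin 0 (Ioi 0)) (nhds (lam * q)) := by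
      have hcont : Continuous fun h : ℝ => Real.exp (-(lam * h)) * lam * q := by
        continuity
      have := (hcont.tendsto 0).mono_left (nhdsWithin_le_nhds (s := Ioi (0:ℝ)))
      simpa using this
    have t2 : Tendsto (fun h : ℝ => Real.exp (-(lam * h)) * lam * q + lam ^ 2 * h / 2)
        (nhdsWithin 0 (Ioi 0)) (nhds (lam * q)) := by
      have hcont : Continuous fun h : ℝ =>
          Real.exp (-(lam * h)) * lam * q + lam ^ 2 * h / 2 := by continuity
      have := (hcont.tendsto 0).mono_left (nhdsWithin_le_nhds (s := Ioi (0:ℝ)))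
      simpa using this
    refine tendsto_of_tendsto_of_tendsto_of_le_of_le' t1 t2 ?_ ?_
    · filter_upwards [self_mem_nhdsWithin] with h hh
      have hh' : (0 : ℝ) < h := hh
      have hb := (cpl_bounds ν c hc (lam * h) (by positivity)).1
      rw [le_div_iff₀ hh']
      calc Real.exp (-(lam * h)) * lam * q * h
          = Real.exp (-(lam * h)) * (lam * h) * q := by ring
        _ ≤ _ := hb
    · filter_upwards [self_mem_nhdsWithin] with h hh
      have hh' : (0 : ℝ) < h := hh
      have hb := (cpl_bounds ν c hc (lam * h) (by positivity)).2
      rw [div_le_iff₀ hh']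
      calc (compoundPoissonLaw (lam * h) ν (Ici c)).toReal
          ≤ Real.exp (-(lam * h)) * (lam * h) * q + (lam * h) ^ 2 / 2 := hb
        _ = (Real.exp (-(lam * h)) * lam * q + lam ^ 2 * h / 2) * h := by ring
  · congr 1
    have h1 : ν (Ici c) = 1 - ν (Iio c) := by
      rw [← compl_Iio, prob_compl_eq_one_sub measurableSet_Iio]
    have h2 : ν (Iio c) = ν (Iic c) := measure_congr (Iio_ae_eq_Iic' (measure_singleton c))
    rw [hq, h1, h2, ENNReal.toReal_sub_of_le prob_le_one ENNReal.one_ne_top,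
      ENNReal.toReal_one, cdf_eq_real, measureReal_def]
end

section
/- Let λ, t, β, D > 0 with D ≥ λtβ, and set a = (1/2)·ln(D/(λtβ)) and b = 1/β − λt·e^a/D. Then for every m ∈ ℕ and every ℓ ≥ D, exp(λt(e^a − 1) − a·m)·(1 − βb)^{−m}·exp(−bℓ) ≤ 1. -/
/-- With `a = (1/2)·ln(D/(λtβ))` and `b = 1/β − λt·e^a/D`, and `D ≥ λtβ`,
the importance-sampling likelihood ratio
`exp(λt(e^a − 1) − a·m)·(1 − βb)^{−m}·exp(−bℓ)` is at most `1` for every `m ∈ ℕ`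
and every `ℓ ≥ D`. -/
theorem gamma_likelihood_ratio_le_one (lam t beta D : ℝ)
    (hlam : 0 < lam) (ht : 0 < t) (hbeta : 0 < beta) (hD : 0 < D)
    (hDge : lam * t * beta ≤ D)
    (a b : ℝ) (ha : a = (1/2) * Real.log (D / (lam * t * beta)))
    (hb : b = 1/beta - lam * t * Real.exp a / D) :
    ∀ (m : ℕ) (ℓ : ℝ), D ≤ ℓ →
      Real.exp (lam * t * (Real.exp a - 1) - a * m) * (1 - beta * b) ^ (-(m : ℤ)) *
        Real.exp (-b * ℓ) ≤ 1 := by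
  intro m ℓ hℓ
  have hltb : 0 < lam * t * beta := by positivity
  have hratio : (1:ℝ) ≤ D / (lam * t * beta) := (one_le_div hltb).2 hDge
  set s := Real.exp a with hs
  have hspos : 0 < s := Real.exp_pos a
  have hkey : lam * t * beta * s ^ 2 = D := by
    have : s ^ 2 = D / (lam * t * beta) := by
      rw [hs, ← Real.exp_nat_mul, ha]
      rw [show (2:ℕ) * ((1/2) * Real.log (D / (lam * t * beta)))
            = Real.log (D / (lam * t * beta)) by ring]
      exact Real.exp_log (by positivity)
    rw [this]; field_simp
  have hs1 : 1 ≤ s := by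
    rw [hs]
    have : 0 ≤ a := by
      rw [ha]
      have := Real.log_nonneg hratio
      linarith
    calc (1:ℝ) = Real.exp 0 := Real.exp_zero.symm
      _ ≤ Real.exp a := Real.exp_le_exp.2 this
  have hbb : 1 - beta * b = 1 / s := by
    rw [hb]
    have : beta * (lam * t * s) = D / s := by
      rw [← hkey]; field_simp
    field_simp
    nlinarith [this]
  have hbD : b * D = lam * t * (s ^ 2 - s) := by
    rw [hb, ← hkey]; field_simp
  have hbnn : 0 ≤ b := by
    have h1 : 0 ≤ b * D := by
      rw [hbD]
      nlinarith [mul_nonneg (mul_pos hlam ht).le (mul_nonneg hspos.le (sub_nonneg.2 hs1))]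
    by_contra h
    push_neg at h
    nlinarith [mul_neg_of_neg_of_pos h hD]
  have hzpow : (1 - beta * b) ^ (-(m : ℤ)) = Real.exp (a * m) := by
    rw [hbb, one_div, zpow_neg, inv_zpow, inv_inv, zpow_natCast, hs, ← Real.exp_nat_mul]
    ring_nf
  rw [hzpow, ← Real.exp_add, ← Real.exp_add]
  rw [show lam * t * (s - 1) - a * m + a * m + -b * ℓ = lam * t * (s - 1) - b * ℓ by ring]
  rw [← Real.exp_zero]
  apply Real.exp_le_exp.2
  have hbl : b * D ≤ b * ℓ := by
    exact mul_le_mul_of_nonneg_left hℓ hbnn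
  simp only [Real.exp_zero]
  nlinarith [hbD, mul_nonneg (mul_pos hlam ht).le (sq_nonneg (s - 1))]
end

section
/- Let λ, t, β, D > 0 with D ≥ λtβ, set a = (1/2)·ln(D/(λtβ)) and b = 1/β − λt·e^a/D, and let L = Σ_{i=1}^{N} X_i be a compound Poisson random variable with N ~ Poisson(λt) and (X_i)_{i≥1} i.i.d. exponential with mean β (Gamma(1,β)), independent of N. Then E[ exp(λt(e^a − 1) − a·N)·(1 − βb)^{−N}·exp(−b·L)·I(L ≥ D) ] ≤ P(L ≥ D). -/
open MeasureTheory ProbabilityTheory Set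

/-- For a compound Poisson loss `L = Σ_{i=1}^N X_i` with `N ~ Poisson(λt)` and
`X_i` i.i.d. exponential with mean `β` (i.e. rate `1/β`), independent of `N`, and the
tilting parameters `a = (1/2)·ln(D/(λtβ))`, `b = 1/β − λt·e^a/D` with `D ≥ λtβ`, the
second moment of the importance-sampling estimator is bounded by the plain Monte Carlo one:
`E[ exp(λt(e^a−1) − aN)·(1−βb)^{−N}·exp(−bL)·I(L ≥ D) ] ≤ P(L ≥ D)`. -/
theorem gamma_IS_second_moment_le
    {Ω : Type*} [MeasurableSpace Ω] (P : Measure Ω) [IsProbabilityMeasure P]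
    (lam t beta D : ℝ) (hlam : 0 < lam) (ht : 0 < t) (hbeta : 0 < beta) (hD : 0 < D)
    (hDge : lam * t * beta ≤ D)
    (a b : ℝ) (ha : a = (1/2) * Real.log (D / (lam * t * beta)))
    (hb : b = 1/beta - lam * t * Real.exp a / D)
    (N : Ω → ℕ) (X : ℕ → Ω → ℝ)
    (hNmeas : Measurable N) (hXmeas : ∀ i, Measurable (X i))
    (hNlaw : P.map N = poissonMeasure (lam * t).toNNReal)
    (hXlaw : ∀ i, P.map (X i) = expMeasure (1 / beta))
    (hXindep : iIndepFun X P)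
    (hNX : IndepFun N (fun ω i => X i ω : Ω → ℕ → ℝ) P)
    (L : Ω → ℝ) (hL : ∀ ω, L ω = ∑ i ∈ Finset.range (N ω), X i ω) :
    ∫ ω in {ω | D ≤ L ω},
        Real.exp (lam * t * (Real.exp a - 1) - a * N ω) * (1 - beta * b) ^ (-(N ω : ℤ)) *
          Real.exp (-b * L ω) ∂P
      ≤ (P {ω | D ≤ L ω}).toReal := by
  -- basic positivity facts
  have hlt : 0 < lam * t := mul_pos hlam ht
  have hltb : 0 < lam * t * beta := mul_pos hlt hbeta
  have hratio : (1:ℝ) ≤ D / (lam * t * beta) := (one_le_div hltb).2 hDge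
  have hratio_pos : 0 < D / (lam * t * beta) := lt_of_lt_of_le one_pos hratio
  have ha0 : 0 ≤ a := by
    rw [ha]
    have := Real.log_nonneg hratio
    linarith
  set E := Real.exp a with hE
  have hE1 : 1 ≤ E := by simpa [hE] using Real.one_le_exp ha0
  have hEpos : 0 < E := Real.exp_pos a
  -- key identity: lam*t*beta*E^2 = D
  have hkey : lam * t * beta * E ^ 2 = D := by
    have h2a : Real.exp (2 * a) = D / (lam * t * beta) := by
      rw [ha]; rw [show 2 * ((1:ℝ)/2 * Real.log (D / (lam * t * beta)))
        = Real.log (D / (lam * t * beta)) by ring]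
      exact Real.exp_log hratio_pos
    have : E ^ 2 = D / (lam * t * beta) := by
      rw [hE, ← Real.exp_nat_mul] at *
      simpa [show ((2:ℕ):ℝ) = 2 by norm_num] using h2a
    rw [this]; field_simp [hltb.ne']
  -- 1 - beta*b = exp(-a)
  have hone : 1 - beta * b = Real.exp (-a) := by
    have hinv : Real.exp (-a) = E⁻¹ := by rw [Real.exp_neg, hE]
    rw [hb, hinv]
    have : beta * (1 / beta - lam * t * E / D) = 1 - beta * lam * t * E / D := by
      field_simp
    rw [this]
    have : beta * lam * t * E / D = E⁻¹ := by
      rw [← hkey]; field_simp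
    rw [this]; ring
  -- b ≥ 0
  have hb0 : 0 ≤ b := by
    rw [hb]
    have h1 : lam * t * E / D ≤ 1 / beta := by
      rw [div_le_div_iff₀ hD hbeta, ← hkey]
      nlinarith
    linarith
  -- exponent bound: lam*t*(E-1) ≤ b * D
  have hexp_bound : lam * t * (E - 1) ≤ b * D := by
    have hbD : b * D = D / beta - lam * t * E := by
      rw [hb]; field_simp
    have hDb : D / beta = lam * t * E ^ 2 := by rw [← hkey]; field_simp
    rw [hbD, hDb]
    nlinarith [mul_nonneg hlt.le (sq_nonneg (E - 1))]
  -- measurability of L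
  have hLmeas : Measurable L := by
    intro A hA
    have : L ⁻¹' A = ⋃ n, {ω | N ω = n} ∩ (fun ω => ∑ i ∈ Finset.range n, X i ω) ⁻¹' A := by
      ext ω
      simp only [mem_preimage, mem_iUnion, mem_inter_iff, mem_setOf_eq]
      constructor
      · intro h; exact ⟨N ω, rfl, by rwa [← hL ω]⟩
      · rintro ⟨n, hn, h⟩; rw [hL ω, hn]; exact h
    rw [this]
    exact MeasurableSet.iUnion fun n =>
      (hNmeas (measurableSet_singleton n)).inter
        ((Finset.measurable_sum _ fun i _ => hXmeas i) hA)
  set s : Set Ω := {ω | D ≤ L ω} with hs_def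
  have hs : MeasurableSet s := measurableSet_le measurable_const hLmeas
  set f : Ω → ℝ := fun ω =>
    Real.exp (lam * t * (Real.exp a - 1) - a * N ω) * (1 - beta * b) ^ (-(N ω : ℤ)) *
      Real.exp (-b * L ω) with hf_def
  -- pointwise bound on s : f ω ≤ 1
  have hbound : ∀ ω ∈ s, f ω ≤ 1 := by
    intro ω hω
    have hDL : D ≤ L ω := hω
    have hzpow : (1 - beta * b) ^ (-(N ω : ℤ)) = Real.exp (a * N ω) := by
      rw [hone, zpow_neg, zpow_natCast, ← Real.exp_nat_mul, ← Real.exp_neg]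
      ring_nf
    have : f ω = Real.exp (lam * t * (E - 1) - b * L ω) := by
      rw [hf_def]
      simp only [hzpow, ← hE, ← Real.exp_add]
      ring_nf
    rw [this]
    have hle : lam * t * (E - 1) - b * L ω ≤ 0 := by
      have : b * D ≤ b * L ω := mul_le_mul_of_nonneg_left hDL hb0
      linarith
    simpa using Real.exp_le_exp.2 (le_trans hle le_rfl) |>.trans_eq Real.exp_zero
  by_cases hInt : IntegrableOn f s P
  · have h1 : ∫ ω in s, f ω ∂P ≤ ∫ _ω in s, (1:ℝ) ∂P := by
      refine setIntegral_mono_on hInt ?_ hs hbound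
      exact integrableOn_const (measure_lt_top P s).ne
    have h2 : ∫ _ω in s, (1:ℝ) ∂P = (P s).toReal := by
      rw [setIntegral_const, smul_eq_mul, mul_one]; rfl
    calc ∫ ω in s, f ω ∂P ≤ ∫ _ω in s, (1:ℝ) ∂P := h1
      _ = (P s).toReal := h2
  · rw [integral_undef hInt]
    exact ENNReal.toReal_nonneg
end

section
/- For every z ∈ ℝ, φ(z)² − z·φ(z)·(1 − Φ(z)) < (1 − Φ(z))², where φ and Φ denote the probability density function and cumulative distribution function of the standard normal distribution. Equivalently, the Mills ratio R_M(z) = φ(z)/(1 − Φ(z)) satisfies R_M(z)² − z·R_M(z) < 1 for all z ∈ ℝ. -/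
open ProbabilityTheory MeasureTheory Real Set Filter

noncomputable def mrS (t : ℝ) : ℝ := Real.sqrt (t^2+4)
noncomputable def mrP (t : ℝ) : ℝ := (Real.sqrt (2*Real.pi))⁻¹ * Real.exp (-t^2/2)
noncomputable def mrH (t : ℝ) : ℝ := mrP t * (mrS t - t) / 2
noncomputable def mrH' (t : ℝ) : ℝ :=
  (-t * mrP t * (mrS t - t) + mrP t * (t / mrS t - 1)) / 2

lemma mrS_sq (t : ℝ) : (mrS t)^2 = t^2 + 4 := Real.sq_sqrt (by positivity)

lemma mrS_pos (t : ℝ) : 0 < mrS t := Real.sqrt_pos.2 (by positivity)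

lemma abs_lt_mrS (t : ℝ) : |t| < mrS t := by
  have h := mrS_sq t
  have h2 := mrS_pos t
  nlinarith [abs_nonneg t, sq_abs t]

lemma mrP_pos (t : ℝ) : 0 < mrP t := by
  unfold mrP
  positivity

lemma gauss_eq_mrP : gaussianPDFReal 0 1 = mrP := by
  funext x
  simp [gaussianPDFReal, mrP, mul_one, sub_zero]

lemma hasDerivAt_mrP (t : ℝ) : HasDerivAt mrP (-t * mrP t) t := by
  have h1 : HasDerivAt (fun x : ℝ => -x^2/2) (-t) t := by
    have := ((hasDerivAt_pow 2 t).neg).div_const 2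
    simpa using this.congr_deriv (by ring)
  have h2 := (h1.exp).const_mul (Real.sqrt (2*Real.pi))⁻¹
  show HasDerivAt (fun x => (Real.sqrt (2*Real.pi))⁻¹ * Real.exp (-x^2/2)) (-t * mrP t) t
  refine h2.congr_deriv ?_
  unfold mrP; ring

lemma hasDerivAt_mrS (t : ℝ) : HasDerivAt mrS (t / mrS t) t := by
  have h1 : HasDerivAt (fun x : ℝ => x^2+4) (2*t) t := by
    simpa using (hasDerivAt_pow 2 t).add_const 4
  have h2 := (Real.hasDerivAt_sqrt (by positivity : t^2+4 ≠ 0)).comp t h1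
  refine h2.congr_deriv ?_
  unfold mrS
  ring

lemma hasDerivAt_mrH (t : ℝ) : HasDerivAt mrH (mrH' t) t := by
  have h := ((hasDerivAt_mrP t).mul ((hasDerivAt_mrS t).sub (hasDerivAt_id t))).div_const 2
  exact h

lemma key_pos (t : ℝ) : 0 < mrP t + mrH' t := by
  have hs := mrS_pos t
  have hsq := mrS_sq t
  have hid : (mrS t)^2*(1+t^2)^2 - (t*(t^2+3))^2 = 4 := by rw [hsq]; ring
  have hK : t * (t^2+3) < mrS t * (1 + t^2) := by
    rcases le_or_gt t 0 with ht | ht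
    · nlinarith [mrS_pos t, sq_nonneg t]
    · by_contra hcon
      push_neg at hcon
      have hApos : 0 < mrS t * (1+t^2) := by positivity
      have hsum : 0 ≤ mrS t * (1+t^2) + t*(t^2+3) := by positivity
      nlinarith [hid, hcon, hsum]
  have hp := mrP_pos t
  have : mrP t + mrH' t = mrP t / (2 * mrS t) * (mrS t * (1+t^2) - t*(t^2+3)) := by
    unfold mrH'
    have h2s : (mrS t) ≠ 0 := (mrS_pos t).ne'
    field_simp
    linear_combination (-t) * hsq
  rw [this]
  have : 0 < mrP t / (2 * mrS t) := by positivity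
  nlinarith [hK]

lemma tendsto_mrH : Tendsto mrH atTop (nhds 0) := by
  have hP : Tendsto mrP atTop (nhds 0) := by
    have h1 : Tendsto (fun t : ℝ => -t^2/2) atTop atBot := by
      apply Tendsto.atBot_div_const (by norm_num)
      exact tendsto_neg_atBot_iff.mpr (tendsto_pow_atTop (by norm_num))
    have h2 := Real.tendsto_exp_atBot.comp h1
    have h3 := h2.const_mul (Real.sqrt (2*Real.pi))⁻¹
    show Tendsto (fun t : ℝ => (Real.sqrt (2*Real.pi))⁻¹ * Real.exp (-t^2/2)) atTop (nhds 0)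
    simpa [Function.comp] using h3
  apply tendsto_of_tendsto_of_tendsto_of_le_of_le' tendsto_const_nhds hP
  · filter_upwards with t
    have := (abs_lt_mrS t).le
    have hp := (mrP_pos t).le
    unfold mrH
    nlinarith [abs_nonneg t, le_abs_self t]
  · filter_upwards [eventually_ge_atTop (0:ℝ)] with t ht
    have hs : mrS t ≤ t + 2 := by
      rw [mrS, show t^2+4 = (t+2)^2 - 4*t by ring]
      calc Real.sqrt ((t+2)^2 - 4*t) ≤ Real.sqrt ((t+2)^2) := by
            apply Real.sqrt_le_sqrt; nlinarith
        _ = t + 2 := Real.sqrt_sq (by linarith)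
    have hp := (mrP_pos t).le
    unfold mrH
    nlinarith

lemma poly_le_exp (t : ℝ) : t^2 + |t| + 1 ≤ 8 * Real.exp (t^2/4) := by
  have e1 : (1:ℝ) + t^2/8 ≤ Real.exp (t^2/8) := by
    linarith [Real.add_one_le_exp (t^2/8)]
  have e3 : Real.exp (t^2/8) * Real.exp (t^2/8) = Real.exp (t^2/4) := by
    rw [← Real.exp_add]; ring_nf
  nlinarith [sq_abs t, abs_nonneg t, sq_nonneg (|t|-1), Real.exp_pos (t^2/8),
    mul_le_mul e1 e1 (by positivity) (Real.exp_pos (t^2/8)).le]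

lemma integrable_mrH' : Integrable mrH' := by
  have hg : Integrable (fun t : ℝ => 8 * (Real.sqrt (2*Real.pi))⁻¹ * Real.exp (-(1/4:ℝ) * t^2)) :=
    (integrable_exp_neg_mul_sq (by norm_num : (0:ℝ) < 1/4)).const_mul _
  have hcont : Continuous mrH' := by
    have hS : Continuous mrS := by
      apply Real.continuous_sqrt.comp; continuity
    have hP : Continuous mrP := by
      unfold mrP; continuity
    apply Continuous.div_const
    apply Continuous.add
    · exact ((continuous_neg.mul hP).mul (hS.sub continuous_id))
    · exact hP.mul ((continuous_id.div hS (fun t => (mrS_pos t).ne')).sub continuous_const)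
  apply hg.mono' hcont.aestronglyMeasurable
  filter_upwards with t
  have hs := mrS_pos t
  have habs := (abs_lt_mrS t).le
  have hp := (mrP_pos t).le
  have hts : |t / mrS t| ≤ 1 := by
    rw [abs_div, abs_of_pos hs, div_le_one hs]; exact habs
  rw [Real.norm_eq_abs]
  unfold mrH'
  rw [abs_div]
  have h1 : |(-t * mrP t * (mrS t - t) + mrP t * (t / mrS t - 1))|
      ≤ |t| * mrP t * (mrS t - t) + mrP t * 2 := by
    calc |(-t * mrP t * (mrS t - t) + mrP t * (t / mrS t - 1))|
        ≤ |(-t * mrP t * (mrS t - t))| + |mrP t * (t / mrS t - 1)| := abs_add_le _ _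
      _ ≤ |t| * mrP t * (mrS t - t) + mrP t * 2 := by
          apply add_le_add
          · rw [abs_mul, abs_mul, abs_neg, abs_of_nonneg hp,
              abs_of_nonneg (by nlinarith [le_abs_self t] : (0:ℝ) ≤ mrS t - t)]
          · rw [abs_mul, abs_of_nonneg hp]
            have : |t / mrS t - 1| ≤ |t/mrS t| + 1 := by
              calc |t / mrS t - 1| ≤ |t/mrS t| + |(1:ℝ)| := abs_sub _ _
                _ = |t/mrS t| + 1 := by norm_num
            nlinarith
  have hs2 : mrS t - t ≤ 2 * |t| + 2 := by
    have : mrS t ≤ |t| + 2 := by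
      rw [mrS]
      calc Real.sqrt (t^2+4) ≤ Real.sqrt ((|t|+2)^2) := by
            apply Real.sqrt_le_sqrt; nlinarith [sq_abs t, abs_nonneg t]
        _ = |t| + 2 := Real.sqrt_sq (by positivity)
    nlinarith [le_abs_self t, neg_abs_le t]
  have hnum : |(-t * mrP t * (mrS t - t) + mrP t * (t / mrS t - 1))|
      ≤ 2 * ((t^2 + |t| + 1) * mrP t) := by
    nlinarith [h1, hs2, mul_nonneg (abs_nonneg t) hp, sq_abs t, abs_nonneg t]
  have hPe : (t^2 + |t| + 1) * mrP t ≤ 8 * (Real.sqrt (2*Real.pi))⁻¹ * Real.exp (-(1/4:ℝ) * t^2) := by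
    have hpe := poly_le_exp t
    have hsplit : mrP t = (Real.sqrt (2*Real.pi))⁻¹ * (Real.exp (-(1/4:ℝ)*t^2) * Real.exp (-(1/4:ℝ)*t^2)) := by
      unfold mrP
      rw [← Real.exp_add]
      ring_nf
    rw [hsplit]
    have hc : (0:ℝ) < (Real.sqrt (2*Real.pi))⁻¹ := by positivity
    have key : (t^2 + |t| + 1) * Real.exp (-(1/4:ℝ)*t^2) ≤ 8 := by
      have hmul : Real.exp (-(1/4:ℝ)*t^2) * Real.exp (t^2/4) = 1 := by
        rw [← Real.exp_add, show (-(1/4:ℝ)*t^2) + t^2/4 = 0 by ring, Real.exp_zero]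
      have h8 := mul_le_mul_of_nonneg_right hpe (Real.exp_pos (-(1/4:ℝ)*t^2)).le
      nlinarith [h8, hmul, Real.exp_pos (-(1/4:ℝ)*t^2)]
    nlinarith [Real.exp_pos (-(1/4:ℝ)*t^2), key, hc]
  rw [abs_two, div_le_iff₀ (by norm_num : (0:ℝ) < 2)]
  nlinarith [h1, hs2, mul_nonneg (abs_nonneg t) hp, sq_abs t, abs_nonneg t]

lemma integrable_mrP : Integrable mrP := gauss_eq_mrP ▸ integrable_gaussianPDFReal 0 1

lemma one_sub_cdf_eq (z : ℝ) :
    1 - cdf (gaussianReal 0 1) z = ∫ t in Ioi z, mrP t := by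
  have hcdf : cdf (gaussianReal 0 1) z = ∫ t in Iic z, mrP t := by
    rw [cdf_eq_real, measureReal_def, gaussianReal_apply_eq_integral 0 one_ne_zero,
      ENNReal.toReal_ofReal (integral_nonneg (fun t => gaussianPDFReal_nonneg 0 1 t)),
      gauss_eq_mrP]
  have htot : (∫ t in Iic z, mrP t) + ∫ t in Ioi z, mrP t = 1 := by
    rw [intervalIntegral.integral_Iic_add_Ioi integrable_mrP.integrableOn integrable_mrP.integrableOn,
      ← gauss_eq_mrP]
    exact integral_gaussianPDFReal_eq_one 0 one_ne_zero
  linarith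

lemma mrH_lt (z : ℝ) : mrH z < ∫ t in Ioi z, mrP t := by
  have hFTC : ∫ t in Ioi z, mrH' t = 0 - mrH z :=
    integral_Ioi_of_hasDerivAt_of_tendsto (hasDerivAt_mrH z).continuousAt.continuousWithinAt
      (fun x _ => hasDerivAt_mrH x) integrable_mrH'.integrableOn tendsto_mrH
  have hpos : 0 < ∫ t in Ioi z, (mrP t + mrH' t) := by
    rw [setIntegral_pos_iff_support_of_nonneg_ae
      (ae_of_all _ (fun t => (key_pos t).le))
      (integrable_mrP.integrableOn.add integrable_mrH'.integrableOn)]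
    have hsupp : Function.support (fun t => mrP t + mrH' t) ∩ Ioi z = Ioi z :=
      Set.inter_eq_right.2 (fun x _ => (key_pos x).ne')
    rw [hsupp]
    simp [Real.volume_Ioi]
  rw [MeasureTheory.integral_add integrable_mrP.integrableOn integrable_mrH'.integrableOn,
    hFTC] at hpos
  linarith

/-- For every `z ∈ ℝ`, `φ(z)² − z·φ(z)·(1 − Φ(z)) < (1 − Φ(z))²`, where `φ`
and `Φ` are the standard normal pdf and cdf; equivalently the Mills ratio
`R_M(z) = φ(z)/(1 − Φ(z))` satisfies `R_M(z)² − z·R_M(z) < 1`. -/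
theorem mills_ratio_inequality (z : ℝ) :
    (gaussianPDFReal 0 1 z)^2 - z * gaussianPDFReal 0 1 z * (1 - cdf (gaussianReal 0 1) z)
      < (1 - cdf (gaussianReal 0 1) z)^2 ∧
    (gaussianPDFReal 0 1 z / (1 - cdf (gaussianReal 0 1) z))^2
      - z * (gaussianPDFReal 0 1 z / (1 - cdf (gaussianReal 0 1) z)) < 1 := by
  rw [gauss_eq_mrP]
  set Q := 1 - cdf (gaussianReal 0 1) z with hQdef
  have hQ : Q = ∫ t in Ioi z, mrP t := one_sub_cdf_eq z
  have hlt : mrH z < Q := hQ ▸ mrH_lt z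
  have hp : 0 < mrP z := mrP_pos z
  have hsq := mrS_sq z
  have habs := abs_lt_mrS z
  have hzlt : z < mrS z := (le_abs_self z).trans_lt habs
  have hzgt : -z < mrS z := (neg_le_abs z).trans_lt habs
  have hH : 0 < mrH z := by
    unfold mrH
    have : 0 < mrS z - z := by linarith
    positivity
  have hQpos : 0 < Q := hH.trans hlt
  have hid : mrH z ^ 2 + z * mrP z * mrH z = (mrP z)^2 := by
    unfold mrH
    linear_combination ((mrP z)^2/4) * hsq
  have hplus : 0 < Q + mrH z + z * mrP z := by
    have : 0 < mrH z + z * mrP z := by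
      unfold mrH
      have h1 : mrH z + z * mrP z = mrP z * (mrS z + z) / 2 := by unfold mrH; ring
      have : 0 < mrS z + z := by linarith
      nlinarith
    linarith
  have part1 : (mrP z)^2 - z * mrP z * Q < Q^2 := by
    nlinarith [mul_pos (sub_pos.2 hlt) hplus, hid]
  refine ⟨part1, ?_⟩
  have h2 : (mrP z / Q)^2 - z * (mrP z / Q) = ((mrP z)^2 - z * mrP z * Q) / Q^2 := by
    field_simp
  rw [h2, div_lt_one (by positivity)]
  exact part1
end

section
/- Let λ, t > 0, μ ∈ ℝ, σ > 0, a, b ∈ ℝ, and D > 0. Let L = Σ_{i=1}^{N} exp(Y_i) with N ~ Poisson(λt) and (Y_i) i.i.d. normal N(μ, σ²), independent of N, and define R = exp(λt(e^a − 1) − a·N)·exp((b²/(2σ²))·N)·exp(−(b/σ²)·Σ_{i=1}^{N}(Y_i − μ)). Let L'' = Σ_{i=1}^{N''} exp(Y''_i) with N'' ~ Poisson(λt·e^{b²/σ² − a}) and (Y''_i) i.i.d. normal N(μ − b, σ²), independent of N''. Then E[R·I(L ≥ D)] = exp( λt(e^a + e^{b²/σ² − a} − 2) )·P(L'' ≥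 D). -/
open MeasureTheory ProbabilityTheory Set
open scoped NNReal ENNReal

namespace LognormalISAux

noncomputable def tiltd (b σ μ : ℝ) (y : ℝ) : ℝ :=
  Real.exp (-(b/σ^2) * (y - μ) - b^2/(2*σ^2))

lemma measurable_tiltd (b σ μ : ℝ) : Measurable (tiltd b σ μ) := by
  unfold tiltd; fun_prop

lemma tiltd_nonneg (b σ μ y : ℝ) : 0 ≤ tiltd b σ μ y := (Real.exp_pos _).le

/-- one-dimensional exponential tilt of a Gaussian -/
lemma gaussian_tilt (μ b σ : ℝ) (hσ : 0 < σ) :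
    (gaussianReal μ (σ^2).toNNReal).withDensity
      (fun y => ENNReal.ofReal (tiltd b σ μ y)) = gaussianReal (μ - b) (σ^2).toNNReal := by
  have hσ2 : (0:ℝ) < σ^2 := by positivity
  have hv : ((σ^2).toNNReal : ℝ≥0) ≠ 0 := by
    simp only [ne_eq, Real.toNNReal_eq_zero, not_le]; exact hσ2
  have hvc : ((σ^2).toNNReal : ℝ) = σ^2 := Real.coe_toNNReal _ hσ2.le
  rw [gaussianReal_of_var_ne_zero _ hv, gaussianReal_of_var_ne_zero _ hv,
    ← withDensity_mul _ (measurable_gaussianPDF _ _)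
      ((measurable_tiltd b σ μ).ennreal_ofReal)]
  congr 1
  ext y
  simp only [Pi.mul_apply, gaussianPDF]
  rw [← ENNReal.ofReal_mul (gaussianPDFReal_nonneg _ _ _)]
  congr 1
  unfold gaussianPDFReal tiltd
  rw [mul_assoc, ← Real.exp_add]
  congr 1
  rw [hvc]
  field_simp
  ring

/-- lintegral of a product of functions of independent random variables -/
lemma lintegral_prod_range {Ω : Type*} [MeasurableSpace Ω] {P : Measure Ω} [IsProbabilityMeasure P]
    {Y : ℕ → Ω → ℝ} (hmeas : ∀ i, Measurable (Y i))
    (hind : iIndepFun Y P)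
    (g : ℕ → ℝ → ℝ≥0∞) (hg : ∀ i, Measurable (g i)) (n : ℕ) :
    ∫⁻ ω, ∏ i ∈ Finset.range n, g i (Y i ω) ∂P
      = ∏ i ∈ Finset.range n, ∫⁻ ω, g i (Y i ω) ∂P := by
  induction n with
  | zero => simp
  | succ n ih =>
    have hbase := hind.indepFun_finset (Finset.range n) {n}
      (by simp [Finset.disjoint_singleton_right]) hmeas
    set φ : ((i : (Finset.range n : Finset ℕ)) → ℝ) → ℝ≥0∞ :=
      fun v => ∏ i : (Finset.range n : Finset ℕ), g i (v i) with hφ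
    set ψ : ((i : ({n} : Finset ℕ)) → ℝ) → ℝ≥0∞ :=
      fun v => g n (v ⟨n, Finset.mem_singleton_self n⟩) with hψ
    have hφm : Measurable φ :=
      Finset.measurable_prod _ (fun i _ => (hg i).comp (measurable_pi_apply i))
    have hψm : Measurable ψ := (hg n).comp (measurable_pi_apply _)
    have hindep : IndepFun (fun ω => ∏ i ∈ Finset.range n, g i (Y i ω))
        (fun ω => g n (Y n ω)) P := by
      have h2 := hbase.comp hφm hψm
      have e1 : (φ ∘ fun ω (i : (Finset.range n : Finset ℕ)) => Y i ω)
          = fun ω => ∏ i ∈ Finset.range n, g i (Y i ω) := by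
        funext ω
        simp only [Function.comp_apply, hφ]
        exact Finset.prod_coe_sort (Finset.range n) (fun i => g i (Y i ω))
      have e2 : (ψ ∘ fun ω (i : ({n} : Finset ℕ)) => Y i ω)
          = fun ω => g n (Y n ω) := rfl
      rwa [e1, e2] at h2
    have hprodm : Measurable fun ω => ∏ i ∈ Finset.range n, g i (Y i ω) :=
      Finset.measurable_prod _ (fun i _ => (hg i).comp (hmeas i))
    calc ∫⁻ ω, ∏ i ∈ Finset.range (n+1), g i (Y i ω) ∂P
        = ∫⁻ ω, ((fun ω => ∏ i ∈ Finset.range n, g i (Y i ω)) *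
            (fun ω => g n (Y n ω))) ω ∂P := by
          simp only [Finset.prod_range_succ, Pi.mul_apply]
      _ = (∫⁻ ω, ∏ i ∈ Finset.range n, g i (Y i ω) ∂P) * ∫⁻ ω, g n (Y n ω) ∂P :=
          lintegral_mul_eq_lintegral_mul_lintegral_of_indepFun hprodm
            ((hg n).comp (hmeas n)) hindep
      _ = ∏ i ∈ Finset.range (n+1), ∫⁻ ω, g i (Y i ω) ∂P := by
          rw [ih, Finset.prod_range_succ]

/-- decomposition of a lintegral over the value of `N` -/
lemma lintegral_decomp {Ω : Type*} [MeasurableSpace Ω] {P : Measure Ω} [IsProbabilityMeasure P]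
    {N : Ω → ℕ} (hN : Measurable N) {W : Ω → ℕ → ℝ} (hW : Measurable W)
    (hind : IndepFun N W P) (F : ℕ → (ℕ → ℝ) → ℝ≥0∞) (hF : ∀ n, Measurable (F n)) :
    ∫⁻ ω, F (N ω) (W ω) ∂P = ∑' n, P {ω | N ω = n} * ∫⁻ ω, F n (W ω) ∂P := by
  have hpt : ∀ ω, F (N ω) (W ω)
      = ∑' n, (if N ω = n then (1:ℝ≥0∞) else 0) * F n (W ω) := by
    intro ω
    rw [tsum_eq_single (N ω) (by intro m hm; simp [Ne.symm hm])]
    simp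
  simp_rw [hpt]
  rw [lintegral_tsum (f := fun n a => (if N a = n then (1:ℝ≥0∞) else 0) * F n (W a)) (fun n => Measurable.aemeasurable
    ((Measurable.ite (hN (measurableSet_singleton n)) measurable_const
      measurable_const).mul ((hF n).comp hW)))]
  refine tsum_congr fun n => ?_
  have hφm : Measurable (fun k : ℕ => if k = n then (1:ℝ≥0∞) else 0) :=
    measurable_from_top
  have hindep : IndepFun ((fun k : ℕ => if k = n then (1:ℝ≥0∞) else 0) ∘ N)
      ((F n) ∘ W) P := hind.comp hφm (hF n)
  have := lintegral_mul_eq_lintegral_mul_lintegral_of_indepFun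
    (hφm.comp hN) ((hF n).comp hW) hindep
  simp only [Pi.mul_apply, Function.comp_apply] at this
  rw [this]
  congr 1
  rw [show (fun a => if N a = n then (1:ℝ≥0∞) else 0)
      = Set.indicator {ω | N ω = n} (fun _ => 1) from funext fun a => by
        simp [Set.indicator_apply, mem_setOf_eq]]
  exact lintegral_indicator_one (hN (measurableSet_singleton n))

/-- the tilted law of the first n coordinates of Y equals the law of the first n
coordinates of Y'' -/
lemma tilted_law {Ω : Type*} [MeasurableSpace Ω] {P : Measure Ω} [IsProbabilityMeasure P] (μ σ b : ℝ) (hσ : 0 < σ)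
    {Y Y'' : ℕ → Ω → ℝ} (hY : ∀ i, Measurable (Y i)) (hY'' : ∀ i, Measurable (Y'' i))
    (hYlaw : ∀ i, P.map (Y i) = gaussianReal μ (σ^2).toNNReal)
    (hY''law : ∀ i, P.map (Y'' i) = gaussianReal (μ - b) (σ^2).toNNReal)
    (hYind : iIndepFun Y P)
    (hY''ind : iIndepFun Y'' P) (n : ℕ) :
    (P.map (fun ω (i : Fin n) => Y i ω)).withDensity
        (fun y => ∏ i, ENNReal.ofReal (tiltd b σ μ (y i)))
      = P.map (fun ω (i : Fin n) => Y'' i ω) := by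
  have hYvec : Measurable (fun ω (i : Fin n) => Y i ω) :=
    measurable_pi_lambda _ fun i => hY i
  have hY''vec : Measurable (fun ω (i : Fin n) => Y'' i ω) :=
    measurable_pi_lambda _ fun i => hY'' i
  have hdens : Measurable (fun y : Fin n → ℝ => ∏ i, ENNReal.ofReal (tiltd b σ μ (y i))) :=
    Finset.measurable_prod _ fun i _ =>
      ((measurable_tiltd b σ μ).ennreal_ofReal).comp (measurable_pi_apply i)
  haveI : IsProbabilityMeasure (P.map (fun ω (i : Fin n) => Y'' i ω)) :=
    Measure.isProbabilityMeasure_map hY''vec.aemeasurable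
  have key : ∀ t : Fin n → Set ℝ, (∀ i, MeasurableSet (t i)) →
      ((P.map (fun ω (i : Fin n) => Y i ω)).withDensity
        (fun y => ∏ i, ENNReal.ofReal (tiltd b σ μ (y i)))) (univ.pi t)
      = (P.map (fun ω (i : Fin n) => Y'' i ω)) (univ.pi t) := by
    intro t ht
    classical
    set t' : ℕ → Set ℝ := fun k => if h : k < n then t ⟨k, h⟩ else univ with ht'def
    have ht' : ∀ k, MeasurableSet (t' k) := by
      intro k
      by_cases h : k < n
      · simpa [ht'def, h] using ht ⟨k, h⟩
      · simp [ht'def, h]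
    have ht'eq : ∀ i : Fin n, t' (i : ℕ) = t i := by
      intro i
      simp [ht'def, i.isLt]
    -- RHS
    have hrhs : (P.map (fun ω (i : Fin n) => Y'' i ω)) (univ.pi t)
        = ∏ k ∈ Finset.range n, (gaussianReal (μ - b) (σ^2).toNNReal) (t' k) := by
      rw [Measure.map_apply hY''vec (MeasurableSet.univ_pi ht)]
      have hpre : (fun ω (i : Fin n) => Y'' i ω) ⁻¹' (univ.pi t)
          = ⋂ k ∈ Finset.range n, Y'' k ⁻¹' t' k := by
        ext ω
        simp only [mem_preimage, mem_pi, mem_univ, true_implies, mem_iInter,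
          Finset.mem_range]
        constructor
        · intro h k hk
          have := h ⟨k, hk⟩
          rwa [← ht'eq ⟨k, hk⟩] at this
        · intro h i
          have := h i i.isLt
          rwa [ht'eq i] at this
      rw [hpre, hY''ind.measure_inter_preimage_eq_mul (Finset.range n)
        (fun k _ => ht' k)]
      refine Finset.prod_congr rfl fun k _ => ?_
      rw [← hY''law k, Measure.map_apply (hY'' k) (ht' k)]
    -- LHS
    have hlhs : ((P.map (fun ω (i : Fin n) => Y i ω)).withDensity
        (fun y => ∏ i, ENNReal.ofReal (tiltd b σ μ (y i)))) (univ.pi t)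
        = ∏ k ∈ Finset.range n, (gaussianReal (μ - b) (σ^2).toNNReal) (t' k) := by
      set gk : ℕ → ℝ → ℝ≥0∞ :=
        fun k => (t' k).indicator (fun x => ENNReal.ofReal (tiltd b σ μ x)) with hgk
      have hgkm : ∀ k, Measurable (gk k) :=
        fun k => ((measurable_tiltd b σ μ).ennreal_ofReal).indicator (ht' k)
      rw [withDensity_apply _ (MeasurableSet.univ_pi ht),
        ← lintegral_indicator (MeasurableSet.univ_pi ht),
        lintegral_map (hdens.indicator (MeasurableSet.univ_pi ht)) hYvec]
      have hpt : ∀ ω, (univ.pi t).indicator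
          (fun y : Fin n → ℝ => ∏ i, ENNReal.ofReal (tiltd b σ μ (y i)))
          (fun i : Fin n => Y i ω)
          = ∏ k ∈ Finset.range n, gk k (Y k ω) := by
        intro ω
        by_cases h : (fun i : Fin n => Y i ω) ∈ univ.pi t
        · rw [indicator_of_mem h,
            ← Fin.prod_univ_eq_prod_range (fun k => gk k (Y k ω)) n]
          refine Finset.prod_congr rfl fun i _ => ?_
          have hmem : Y (i : ℕ) ω ∈ t' (i : ℕ) := by
            rw [ht'eq i]; exact h i (mem_univ i)
          rw [hgk]
          simp only [indicator_of_mem hmem]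
        · rw [indicator_of_notMem h]
          simp only [mem_pi, mem_univ, true_implies, not_forall] at h
          obtain ⟨i, hi⟩ := h
          refine (Finset.prod_eq_zero (Finset.mem_range.2 i.isLt) ?_).symm
          rw [hgk]
          simp only []
          rw [indicator_of_notMem]
          rw [ht'eq i]
          exact hi
      calc ∫⁻ ω, (univ.pi t).indicator
            (fun y : Fin n → ℝ => ∏ i, ENNReal.ofReal (tiltd b σ μ (y i)))
            (fun i : Fin n => Y i ω) ∂P
          = ∫⁻ ω, ∏ k ∈ Finset.range n, gk k (Y k ω) ∂P := lintegral_congr hpt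
        _ = ∏ k ∈ Finset.range n, ∫⁻ ω, gk k (Y k ω) ∂P :=
            lintegral_prod_range hY hYind gk hgkm n
        _ = ∏ k ∈ Finset.range n, (gaussianReal (μ - b) (σ^2).toNNReal) (t' k) := by
            refine Finset.prod_congr rfl fun k _ => ?_
            rw [hgk]
            calc ∫⁻ ω, (t' k).indicator (fun x => ENNReal.ofReal (tiltd b σ μ x)) (Y k ω) ∂P
                = ∫⁻ x, (t' k).indicator (fun x => ENNReal.ofReal (tiltd b σ μ x)) x
                    ∂(P.map (Y k)) := (lintegral_map (hgkm k) (hY k)).symm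
              _ = ∫⁻ x in t' k, ENNReal.ofReal (tiltd b σ μ x)
                    ∂(gaussianReal μ (σ^2).toNNReal) := by
                  rw [lintegral_indicator (ht' k), hYlaw k]
              _ = ((gaussianReal μ (σ^2).toNNReal).withDensity
                    (fun y => ENNReal.ofReal (tiltd b σ μ y))) (t' k) :=
                  (withDensity_apply _ (ht' k)).symm
              _ = (gaussianReal (μ - b) (σ^2).toNNReal) (t' k) := by
                  rw [gaussian_tilt μ b σ hσ]
    rw [hlhs, hrhs]
  symm
  refine ext_of_generate_finite _ generateFrom_pi.symm isPiSystem_pi ?_ ?_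
  · rintro s ⟨t, ht, rfl⟩
    exact (key t fun i => ht i (mem_univ i)).symm
  · have := key (fun _ => univ) (fun _ => MeasurableSet.univ)
    rw [Set.pi_univ] at this
    exact this.symm

lemma pois_apply (r : ℝ≥0) (n : ℕ) :
    poissonMeasure r {n} = ENNReal.ofReal (Real.exp (-(r:ℝ)) * (r:ℝ)^n / n.factorial) := by
  exact poissonMeasure_singleton r n

end LognormalISAux

open LognormalISAux

/-- Change-of-measure identity for the second moment of the lognormal IS
estimator. `L = Σ_{i<N} exp(Y_i)` with `N ~ Poisson(λt)`,
`Y_i` i.i.d. `N(μ,σ²)` independent of `N`; the likelihood ratio is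
`R = exp(λt(e^a−1) − aN)·exp((b²/2σ²)N)·exp(−(b/σ²)Σ(Y_i−μ))`; and
`L'' = Σ_{i<N''} exp(Y''_i)` with `N'' ~ Poisson(λt·e^{b²/σ²−a})` and `Y''_i` i.i.d.
`N(μ−b,σ²)` independent of `N''`. Then
`E[R·I(L ≥ D)] = exp(λt(e^a + e^{b²/σ²−a} − 2))·P(L'' ≥ D)`. -/
theorem lognormal_IS_second_moment_identity
    {Ω : Type*} [MeasurableSpace Ω] (P : Measure Ω) [IsProbabilityMeasure P]
    (lam t : ℝ) (hlam : 0 < lam) (ht : 0 < t) (μ σ : ℝ) (hσ : 0 < σ)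
    (a b : ℝ) (D : ℝ) (hD : 0 < D)
    (N N'' : Ω → ℕ) (Y Y'' : ℕ → Ω → ℝ)
    (hNmeas : Measurable N) (hN''meas : Measurable N'')
    (hYmeas : ∀ i, Measurable (Y i)) (hY''meas : ∀ i, Measurable (Y'' i))
    (hNlaw : P.map N = poissonMeasure (lam * t).toNNReal)
    (hN''law : P.map N'' = poissonMeasure (lam * t * Real.exp (b^2/σ^2 - a)).toNNReal)
    (hYlaw : ∀ i, P.map (Y i) = gaussianReal μ (σ^2).toNNReal)
    (hY''law : ∀ i, P.map (Y'' i) = gaussianReal (μ - b) (σ^2).toNNReal)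
    (hYindep : iIndepFun Y P)
    (hY''indep : iIndepFun Y'' P)
    (hNY : IndepFun N (fun ω i => Y i ω : Ω → ℕ → ℝ) P)
    (hN''Y'' : IndepFun N'' (fun ω i => Y'' i ω : Ω → ℕ → ℝ) P)
    (L L'' : Ω → ℝ)
    (hL : ∀ ω, L ω = ∑ i ∈ Finset.range (N ω), Real.exp (Y i ω))
    (hL'' : ∀ ω, L'' ω = ∑ i ∈ Finset.range (N'' ω), Real.exp (Y'' i ω))
    (R : Ω → ℝ)
    (hR : ∀ ω, R ω = Real.exp (lam * t * (Real.exp a - 1) - a * N ω) *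
        Real.exp ((b^2 / (2 * σ^2)) * N ω) *
        Real.exp (-(b / σ^2) * ∑ i ∈ Finset.range (N ω), (Y i ω - μ))) :
    ∫ ω in {ω | D ≤ L ω}, R ω ∂P
      = Real.exp (lam * t * (Real.exp a + Real.exp (b^2/σ^2 - a) - 2)) *
          (P {ω | D ≤ L'' ω}).toReal := by
  classical
  have hσ2 : (0:ℝ) < σ^2 := by positivity
  have hσ2' : σ^2 ≠ 0 := ne_of_gt hσ2
  set C : ℝ := Real.exp (lam * t * (Real.exp a + Real.exp (b^2/σ^2 - a) - 2)) with hC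
  -- measurability of the sequence maps
  have hWmeas : Measurable (fun ω (i : ℕ) => Y i ω) :=
    measurable_pi_lambda _ fun i => hYmeas i
  have hW''meas : Measurable (fun ω (i : ℕ) => Y'' i ω) :=
    measurable_pi_lambda _ fun i => hY''meas i
  -- measurability of sums over a variable range
  have hsumfun : Measurable (fun p : (ℕ → ℝ) × ℕ => ∑ i ∈ Finset.range p.2, Real.exp (p.1 i)) :=
    measurable_from_prod_countable_left fun n => by
      show Measurable fun w : ℕ → ℝ => ∑ i ∈ Finset.range n, Real.exp (w i)
      exact Finset.measurable_sum _ fun i _ =>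
        Real.measurable_exp.comp (measurable_pi_apply i)
  have hLmeas : Measurable L := by
    have : L = (fun p : (ℕ → ℝ) × ℕ => ∑ i ∈ Finset.range p.2, Real.exp (p.1 i)) ∘
        (fun ω => ((fun i => Y i ω), N ω)) := funext fun ω => hL ω
    rw [this]
    exact hsumfun.comp (hWmeas.prodMk hNmeas)
  have hL''meas : Measurable L'' := by
    have : L'' = (fun p : (ℕ → ℝ) × ℕ => ∑ i ∈ Finset.range p.2, Real.exp (p.1 i)) ∘
        (fun ω => ((fun i => Y'' i ω), N'' ω)) := funext fun ω => hL'' ω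
    rw [this]
    exact hsumfun.comp (hW''meas.prodMk hN''meas)
  have hA : MeasurableSet {ω | D ≤ L ω} := measurableSet_le measurable_const hLmeas
  have hA'' : MeasurableSet {ω | D ≤ L'' ω} := measurableSet_le measurable_const hL''meas
  have hRmeas : Measurable R := by
    have h1 : Measurable (fun p : (ℕ → ℝ) × ℕ =>
        Real.exp (lam * t * (Real.exp a - 1) - a * p.2) *
        Real.exp ((b^2 / (2 * σ^2)) * p.2) *
        Real.exp (-(b / σ^2) * ∑ i ∈ Finset.range p.2, (p.1 i - μ))) :=
      measurable_from_prod_countable_left fun n => by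
        show Measurable fun w : ℕ → ℝ =>
          Real.exp (lam * t * (Real.exp a - 1) - a * n) *
          Real.exp ((b^2 / (2 * σ^2)) * n) *
          Real.exp (-(b / σ^2) * ∑ i ∈ Finset.range n, (w i - μ))
        have hs : Measurable (fun w : ℕ → ℝ => ∑ i ∈ Finset.range n, (w i - μ)) :=
          Finset.measurable_sum _ fun i _ => (measurable_pi_apply i).sub measurable_const
        exact (measurable_const.mul
          (Real.measurable_exp.comp (hs.const_mul _)))
    have : R = (fun p : (ℕ → ℝ) × ℕ =>
        Real.exp (lam * t * (Real.exp a - 1) - a * p.2) *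
        Real.exp ((b^2 / (2 * σ^2)) * p.2) *
        Real.exp (-(b / σ^2) * ∑ i ∈ Finset.range p.2, (p.1 i - μ))) ∘
        (fun ω => ((fun i => Y i ω), N ω)) := funext fun ω => hR ω
    rw [this]
    exact h1.comp (hWmeas.prodMk hNmeas)
  -- the integrand as a function of (N, Y-sequence)
  set F : ℕ → (ℕ → ℝ) → ℝ≥0∞ := fun n w =>
    if D ≤ ∑ i ∈ Finset.range n, Real.exp (w i) then
      ENNReal.ofReal (Real.exp (lam * t * (Real.exp a - 1) - a * n) *
        Real.exp ((b^2 / (2 * σ^2)) * n) *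
        Real.exp (-(b / σ^2) * ∑ i ∈ Finset.range n, (w i - μ))) else 0 with hF
  have hFmeas : ∀ n, Measurable (F n) := by
    intro n
    have hc : MeasurableSet {w : ℕ → ℝ | D ≤ ∑ i ∈ Finset.range n, Real.exp (w i)} :=
      measurableSet_le measurable_const
        (Finset.measurable_sum _ fun i _ => Real.measurable_exp.comp (measurable_pi_apply i))
    have hs : Measurable (fun w : ℕ → ℝ => ∑ i ∈ Finset.range n, (w i - μ)) :=
      Finset.measurable_sum _ fun i _ => (measurable_pi_apply i).sub measurable_const
    exact Measurable.ite hc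
      ((measurable_const.mul (Real.measurable_exp.comp (hs.const_mul _))).ennreal_ofReal)
      measurable_const
  set F'' : ℕ → (ℕ → ℝ) → ℝ≥0∞ := fun n w =>
    if D ≤ ∑ i ∈ Finset.range n, Real.exp (w i) then 1 else 0 with hF''
  have hF''meas : ∀ n, Measurable (F'' n) := by
    intro n
    have hc : MeasurableSet {w : ℕ → ℝ | D ≤ ∑ i ∈ Finset.range n, Real.exp (w i)} :=
      measurableSet_le measurable_const
        (Finset.measurable_sum _ fun i _ => Real.measurable_exp.comp (measurable_pi_apply i))
    exact Measurable.ite hc measurable_const measurable_const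
  -- the common tail probabilities
  set B : ℕ → ℝ≥0∞ := fun n => P {ω | D ≤ ∑ i ∈ Finset.range n, Real.exp (Y'' i ω)} with hB
  have hBmeas : ∀ n, MeasurableSet {ω | D ≤ ∑ i ∈ Finset.range n, Real.exp (Y'' i ω)} :=
    fun n => measurableSet_le measurable_const
      (Finset.measurable_sum _ fun i _ => Real.measurable_exp.comp (hY''meas i))
  -- constants
  set K : ℕ → ℝ := fun n => Real.exp (lam * t * (Real.exp a - 1) - a * n) *
    Real.exp ((b^2/σ^2) * n) with hK
  -- Step 1 : Bochner integral to lintegral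
  have hRnonneg : 0 ≤ᵐ[P.restrict {ω | D ≤ L ω}] R :=
    Filter.Eventually.of_forall fun ω => by rw [hR]; positivity
  rw [integral_eq_lintegral_of_nonneg_ae hRnonneg hRmeas.aestronglyMeasurable.restrict]
  -- Step 2 : transform to F (N ω) (Y · ω)
  have h1 : ∫⁻ ω, ENNReal.ofReal (R ω) ∂(P.restrict {ω | D ≤ L ω})
      = ∫⁻ ω, F (N ω) (fun i => Y i ω) ∂P := by
    rw [← lintegral_indicator hA]
    refine lintegral_congr fun ω => ?_
    rw [indicator_apply]
    simp only [mem_setOf_eq, hL ω, hR ω, hF]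
  -- Step 3 : per-term computation
  have hterm : ∀ n, ∫⁻ ω, F n (fun i => Y i ω) ∂P = ENNReal.ofReal (K n) * B n := by
    intro n
    -- pointwise factorization
    have hpt : ∀ w : ℕ → ℝ, F n w = ENNReal.ofReal (K n) *
        ((if D ≤ ∑ i ∈ Finset.range n, Real.exp (w i) then 1 else 0) *
          ∏ i ∈ Finset.range n, ENNReal.ofReal (tiltd b σ μ (w i))) := by
      intro w
      simp only [hF]
      by_cases hc : D ≤ ∑ i ∈ Finset.range n, Real.exp (w i)
      · rw [if_pos hc, if_pos hc, one_mul,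
          ← ENNReal.ofReal_prod_of_nonneg (fun i _ => tiltd_nonneg b σ μ (w i)),
          ← ENNReal.ofReal_mul (by positivity)]
        congr 1
        have hprod : ∏ i ∈ Finset.range n, tiltd b σ μ (w i)
            = Real.exp (∑ i ∈ Finset.range n,
                (-(b/σ^2) * (w i - μ) - b^2/(2*σ^2))) := by
          rw [Real.exp_sum]; rfl
        have hsum2 : ∑ i ∈ Finset.range n, (-(b/σ^2) * (w i - μ) - b^2/(2*σ^2))
            = -(b/σ^2) * (∑ i ∈ Finset.range n, (w i - μ)) - n * (b^2/(2*σ^2)) := by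
          rw [Finset.sum_sub_distrib, ← Finset.mul_sum, Finset.sum_const, Finset.card_range,
            nsmul_eq_mul]
        rw [hprod, hsum2]
        simp only [hK]
        simp only [← Real.exp_add]
        congr 1
        field_simp
        ring
      · rw [if_neg hc, if_neg hc, zero_mul, mul_zero]
    simp_rw [hpt]
    rw [lintegral_const_mul]
    swap
    · exact ((hF''meas n).comp hWmeas).mul
        (Finset.measurable_prod _ fun i _ =>
          ((measurable_tiltd b σ μ).ennreal_ofReal).comp (hYmeas i))
    congr 1
    -- now the tilt identity
    set g : (Fin n → ℝ) → ℝ≥0∞ := fun y =>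
      if D ≤ ∑ i, Real.exp (y i) then 1 else 0 with hg
    have hgm : Measurable g := by
      refine Measurable.ite (measurableSet_le measurable_const ?_) measurable_const
        measurable_const
      exact Finset.measurable_sum _ fun i _ => Real.measurable_exp.comp (measurable_pi_apply i)
    have hdens : Measurable (fun y : Fin n → ℝ => ∏ i, ENNReal.ofReal (tiltd b σ μ (y i))) :=
      Finset.measurable_prod _ fun i _ =>
        ((measurable_tiltd b σ μ).ennreal_ofReal).comp (measurable_pi_apply i)
    have hYvec : Measurable (fun ω (i : Fin n) => Y i ω) :=
      measurable_pi_lambda _ fun i => hYmeas i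
    have hY''vec : Measurable (fun ω (i : Fin n) => Y'' i ω) :=
      measurable_pi_lambda _ fun i => hY''meas i
    have e1 : ∀ ω, (if D ≤ ∑ i ∈ Finset.range n, Real.exp (Y i ω) then (1:ℝ≥0∞) else 0) *
        ∏ i ∈ Finset.range n, ENNReal.ofReal (tiltd b σ μ (Y i ω))
        = ((fun y : Fin n → ℝ => ∏ i, ENNReal.ofReal (tiltd b σ μ (y i))) *
            g) (fun i : Fin n => Y i ω) := by
      intro ω
      simp only [Pi.mul_apply, hg]
      rw [Fin.sum_univ_eq_sum_range (fun i => Real.exp (Y i ω)) n,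
        Fin.prod_univ_eq_prod_range (fun i => ENNReal.ofReal (tiltd b σ μ (Y i ω))) n]
      ring
    calc ∫⁻ ω, (if D ≤ ∑ i ∈ Finset.range n, Real.exp (Y i ω) then (1:ℝ≥0∞) else 0) *
            ∏ i ∈ Finset.range n, ENNReal.ofReal (tiltd b σ μ (Y i ω)) ∂P
        = ∫⁻ ω, ((fun y : Fin n → ℝ => ∏ i, ENNReal.ofReal (tiltd b σ μ (y i))) * g)
            ((fun ω (i : Fin n) => Y i ω) ω) ∂P := lintegral_congr e1
      _ = ∫⁻ y, ((fun y : Fin n → ℝ => ∏ i, ENNReal.ofReal (tiltd b σ μ (y i))) * g) y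
            ∂(P.map (fun ω (i : Fin n) => Y i ω)) :=
          (lintegral_map (hdens.mul hgm) hYvec).symm
      _ = ∫⁻ y, g y ∂((P.map (fun ω (i : Fin n) => Y i ω)).withDensity
            (fun y => ∏ i, ENNReal.ofReal (tiltd b σ μ (y i)))) :=
          (lintegral_withDensity_eq_lintegral_mul _ hdens hgm).symm
      _ = ∫⁻ y, g y ∂(P.map (fun ω (i : Fin n) => Y'' i ω)) := by
          rw [tilted_law μ σ b hσ hYmeas hY''meas hYlaw hY''law hYindep hY''indep n]
      _ = ∫⁻ ω, g (fun i : Fin n => Y'' i ω) ∂P := lintegral_map hgm hY''vec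
      _ = B n := by
          rw [hB]
          have : ∀ ω, g (fun i : Fin n => Y'' i ω)
              = {ω | D ≤ ∑ i ∈ Finset.range n, Real.exp (Y'' i ω)}.indicator
                  (1 : Ω → ℝ≥0∞) ω := by
            intro ω
            rw [hg, indicator_apply]
            simp only [mem_setOf_eq, Pi.one_apply,
              Fin.sum_univ_eq_sum_range (fun i => Real.exp (Y'' i ω)) n]
          rw [lintegral_congr this, lintegral_indicator_one (hBmeas n)]
  -- Step 4 : RHS decomposition
  have h2 : P {ω | D ≤ L'' ω} = ∑' n, P {ω | N'' ω = n} * B n := by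
    have e0 : P {ω | D ≤ L'' ω} = ∫⁻ ω, F'' (N'' ω) (fun i => Y'' i ω) ∂P := by
      rw [← lintegral_indicator_one hA'']
      refine lintegral_congr fun ω => ?_
      rw [indicator_apply]
      simp only [mem_setOf_eq, hL'' ω, hF'', Pi.one_apply]
    rw [e0, lintegral_decomp hN''meas hW''meas hN''Y'' F'' hF''meas]
    refine tsum_congr fun n => ?_
    congr 1
    have : ∀ ω, F'' n (fun i => Y'' i ω)
        = {ω | D ≤ ∑ i ∈ Finset.range n, Real.exp (Y'' i ω)}.indicator
            (1 : Ω → ℝ≥0∞) ω := by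
      intro ω
      simp only [hF'', indicator_apply, mem_setOf_eq, Pi.one_apply]
    rw [lintegral_congr this, lintegral_indicator_one (hBmeas n)]
  -- Step 5 : Poisson pmf values
  have hlt : (0:ℝ) ≤ lam * t := by positivity
  have hm'' : (0:ℝ) ≤ lam * t * Real.exp (b^2/σ^2 - a) := by positivity
  have hNpmf : ∀ n, P {ω | N ω = n}
      = ENNReal.ofReal (Real.exp (-(lam*t)) * (lam*t)^n / n.factorial) := by
    intro n
    have e : P {ω | N ω = n} = (P.map N) {n} := by
      rw [Measure.map_apply hNmeas (measurableSet_singleton n)]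
      rfl
    rw [e, hNlaw, pois_apply, Real.coe_toNNReal _ hlt]
  have hN''pmf : ∀ n, P {ω | N'' ω = n}
      = ENNReal.ofReal (Real.exp (-(lam * t * Real.exp (b^2/σ^2 - a))) *
          (lam * t * Real.exp (b^2/σ^2 - a))^n / n.factorial) := by
    intro n
    have e : P {ω | N'' ω = n} = (P.map N'') {n} := by
      rw [Measure.map_apply hN''meas (measurableSet_singleton n)]
      rfl
    rw [e, hN''law, pois_apply, Real.coe_toNNReal _ hm'']
  -- Step 6 : termwise identity
  have hterm2 : ∀ n, P {ω | N ω = n} * (ENNReal.ofReal (K n) * B n)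
      = ENNReal.ofReal C * (P {ω | N'' ω = n} * B n) := by
    intro n
    rw [hNpmf n, hN''pmf n, ← mul_assoc, ← mul_assoc,
      ← ENNReal.ofReal_mul (by positivity), ← ENNReal.ofReal_mul (Real.exp_pos _).le]
    congr 2
    have hfac : (0:ℝ) < (n.factorial : ℝ) := by positivity
    have hpow : (lam * t * Real.exp (b^2/σ^2 - a))^n
        = (lam*t)^n * Real.exp ((n:ℝ) * (b^2/σ^2 - a)) := by
      rw [mul_pow, Real.exp_nat_mul]
    have E1 : Real.exp (-(lam*t)) * (lam*t)^n / n.factorial * K n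
        = Real.exp ((-(lam*t) + (lam * t * (Real.exp a - 1) - a * n)) + b^2/σ^2 * n) *
          ((lam*t)^n / n.factorial) := by
      simp only [hK]
      rw [Real.exp_add, Real.exp_add]
      ring
    have E2 : C * (Real.exp (-(lam * t * Real.exp (b^2/σ^2 - a))) *
          (lam * t * Real.exp (b^2/σ^2 - a))^n / n.factorial)
        = Real.exp ((lam * t * (Real.exp a + Real.exp (b^2/σ^2 - a) - 2) +
            -(lam * t * Real.exp (b^2/σ^2 - a))) + (n:ℝ) * (b^2/σ^2 - a)) *
          ((lam*t)^n / n.factorial) := by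
      rw [hpow, hC, Real.exp_add, Real.exp_add]
      ring
    rw [E1, E2]
    congr 2
    ring
  -- Step 7 : put everything together
  rw [h1, lintegral_decomp hNmeas hWmeas hNY F hFmeas]
  have : ∑' n, P {ω | N ω = n} * ∫⁻ ω, F n (fun i => Y i ω) ∂P
      = ENNReal.ofReal C * ∑' n, P {ω | N'' ω = n} * B n := by
    rw [← ENNReal.tsum_mul_left]
    refine tsum_congr fun n => ?_
    rw [hterm n, hterm2 n]
  rw [this, ← h2, ENNReal.toReal_mul, ENNReal.toReal_ofReal (Real.exp_pos _).le]
end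

section
/- Let (X_i)_{i≥1} be i.i.d. real random variables with X₁ > 0 almost surely and with atomless law. Then for every D > 0 and every ε > 0 there exists δ > 0 such that for all n ≥ 1, P( D ≤ X₁ + ⋯ + X_n ≤ D + δ ) < ε. -/
open MeasureTheory ProbabilityTheory Set Filter Topology

/-- Auxiliary: the partial sums (with at least one term) of i.i.d. random variables with
atomless law have atomless law. -/
lemma aux_sum_atomless
    {Ω : Type*} [MeasurableSpace Ω] (P : Measure Ω) [IsProbabilityMeasure P]
    (ν : Measure ℝ) [IsProbabilityMeasure ν] [NullSingletonClass ν]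
    (X : ℕ → Ω → ℝ)
    (hXmeas : ∀ i, Measurable (X i))
    (hXlaw : ∀ i, P.map (X i) = ν)
    (hXindep : iIndepFun X P)
    (n : ℕ) (x : ℝ) :
    P {ω | ∑ i ∈ Finset.range (n + 1), X i ω = x} = 0 := by
  classical
  set T : Ω → ℝ := ∑ i ∈ Finset.range n, X i with hT
  have hTapp : ∀ ω, T ω = ∑ i ∈ Finset.range n, X i ω := by
    intro ω; rw [hT]; simp [Finset.sum_apply]
  have hTmeas : Measurable T := by
    have h : Measurable (fun ω => ∑ i ∈ Finset.range n, X i ω) :=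
      Finset.measurable_sum _ (fun i _ => hXmeas i)
    have he : T = fun ω => ∑ i ∈ Finset.range n, X i ω := funext hTapp
    rw [he]; exact h
  have hindep : IndepFun T (X n) P := hXindep.indepFun_sum_range_succ hXmeas n
  have hmap : P.map (fun ω => (T ω, X n ω)) = (P.map T).prod (P.map (X n)) :=
    (indepFun_iff_map_prod_eq_prod_map_map hTmeas.aemeasurable
      (hXmeas n).aemeasurable).1 hindep
  have hs : MeasurableSet {p : ℝ × ℝ | p.1 + p.2 = x} :=
    (measurable_fst.add measurable_snd) (measurableSet_singleton x)
  have h1 : {ω | ∑ i ∈ Finset.range (n + 1), X i ω = x}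
      = (fun ω => (T ω, X n ω)) ⁻¹' {p : ℝ × ℝ | p.1 + p.2 = x} := by
    ext ω
    simp [Finset.sum_range_succ, hTapp]
  rw [h1, ← Measure.map_apply (hTmeas.prodMk (hXmeas n)) hs, hmap, hXlaw n,
    Measure.prod_apply hs]
  have h2 : ∀ a : ℝ, ν (Prod.mk a ⁻¹' {p : ℝ × ℝ | p.1 + p.2 = x}) = 0 := by
    intro a
    have : Prod.mk a ⁻¹' {p : ℝ × ℝ | p.1 + p.2 = x} = {x - a} := by
      ext y
      constructor
      · intro h
        simp only [mem_preimage, mem_setOf_eq] at h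
        simp [eq_sub_of_add_eq' h]
      · intro h
        simp only [mem_singleton_iff] at h
        simp [h]
    rw [this]
    exact measure_singleton _
  simp only [h2]
  simp

/-- Uniform-in-`n` small-interval estimate for partial sums of i.i.d.
almost surely positive random variables with atomless law: for every `D > 0` and
`ε > 0` there is `δ > 0` with `P(D ≤ X₁ + ⋯ + X_n ≤ D + δ) < ε` for all `n ≥ 1`. -/
theorem iid_partial_sums_uniform_small_interval
    {Ω : Type*} [MeasurableSpace Ω] (P : Measure Ω) [IsProbabilityMeasure P]
    (ν : Measure ℝ) [IsProbabilityMeasure ν] [NullSingletonClass ν]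
    (X : ℕ → Ω → ℝ)
    (hXmeas : ∀ i, Measurable (X i))
    (hXlaw : ∀ i, P.map (X i) = ν)
    (hXindep : iIndepFun X P)
    (hpos : ∀ᵐ ω ∂P, 0 < X 0 ω) :
    ∀ D : ℝ, 0 < D → ∀ ε : ℝ, 0 < ε → ∃ δ : ℝ, 0 < δ ∧ ∀ n : ℕ, 1 ≤ n →
      (P {ω | D ≤ ∑ i ∈ Finset.range n, X i ω ∧
              ∑ i ∈ Finset.range n, X i ω ≤ D + δ}).toReal < ε := by
  classical
  intro D hD ε hε
  set S : ℕ → Ω → ℝ := fun n ω => ∑ i ∈ Finset.range n, X i ω with hS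
  have hSmeas : ∀ n, Measurable (S n) :=
    fun n => Finset.measurable_sum _ (fun i _ => hXmeas i)
  have hεE : (0 : ENNReal) < ENNReal.ofReal ε := ENNReal.ofReal_pos.2 hε
  -- each X i is a.s. positive
  have hposi : ∀ i, ∀ᵐ ω ∂P, 0 < X i ω := by
    intro i
    have h0 : P {ω | ¬ 0 < X 0 ω} = 0 := ae_iff.1 hpos
    have hset : ∀ j : ℕ, {ω | ¬ 0 < X j ω} = X j ⁻¹' (Iic 0) := by
      intro j; ext ω; simp [not_lt]
    have hIic : MeasurableSet (Iic (0:ℝ)) := measurableSet_Iic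
    have hi : P {ω | ¬ 0 < X i ω} = 0 := by
      rw [hset i, ← Measure.map_apply (hXmeas i) hIic, hXlaw i, ← hXlaw 0,
        Measure.map_apply (hXmeas 0) hIic, ← hset 0]
      exact h0
    exact ae_iff.2 hi
  have hposall : ∀ᵐ ω ∂P, ∀ i, 0 < X i ω := ae_all_iff.2 hposi
  -- truncated variables
  set g : ℝ → ℝ := fun x => min (max x 0) 1 with hg
  have hgmeas : Measurable g := (measurable_id.max measurable_const).min measurable_const
  set Y : ℕ → Ω → ℝ := fun i => g ∘ X i with hY
  have hYmeas : ∀ i, Measurable (Y i) := fun i => hgmeas.comp (hXmeas i)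
  have hYindep' : iIndepFun Y P :=
    hXindep.comp (fun _ => g) (fun _ => hgmeas)
  have hYindep : Pairwise (Function.onFun (IndepFun · · P) Y) :=
    fun i j hij => hYindep'.indepFun hij
  have hXident : ∀ i, IdentDistrib (X i) (X 0) P P := fun i =>
    ⟨(hXmeas i).aemeasurable, (hXmeas 0).aemeasurable, by rw [hXlaw i, hXlaw 0]⟩
  have hYident : ∀ i, IdentDistrib (Y i) (Y 0) P P := fun i => (hXident i).comp hgmeas
  have hYbd : ∀ i ω, Y i ω ∈ Icc (0:ℝ) 1 := by
    intro i ω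
    constructor
    · exact le_min (le_max_right _ _) zero_le_one
    · exact min_le_right _ _
  have hYint : Integrable (Y 0) P := by
    refine (integrable_const (1:ℝ)).mono' (hYmeas 0).aestronglyMeasurable ?_
    filter_upwards with ω
    rw [Real.norm_eq_abs, abs_le]
    exact ⟨by linarith [(hYbd 0 ω).1], (hYbd 0 ω).2⟩
  have hYle : ∀ i ω, 0 < X i ω → Y i ω ≤ X i ω := by
    intro i ω hx
    have : max (X i ω) 0 = X i ω := max_eq_left hx.le
    calc Y i ω ≤ max (X i ω) 0 := min_le_left _ _
      _ = X i ω := this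
  -- positive mean
  have hmean : 0 < ∫ ω, Y 0 ω ∂P := by
    rw [integral_pos_iff_support_of_nonneg_ae
      (Filter.Eventually.of_forall (fun ω => (hYbd 0 ω).1)) hYint]
    have hnull : P (Function.support (Y 0))ᶜ = 0 := by
      have : (Function.support (Y 0))ᶜ ⊆ {ω | ¬ 0 < X 0 ω} := by
        intro ω hω
        simp only [Function.mem_support, not_not, mem_compl_iff] at hω
        intro hx
        have h1 : Y 0 ω = min (X 0 ω) 1 := by
          simp only [hY, hg, Function.comp_apply, max_eq_left hx.le]
        have : 0 < Y 0 ω := by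
          rw [h1]; exact lt_min hx one_pos
        simp_all
      exact measure_mono_null this (ae_iff.1 hpos)
    by_contra h
    push_neg at h
    have h0 : P (Function.support (Y 0)) = 0 := le_antisymm h (zero_le)
    have : (1 : ENNReal) ≤ 0 := by
      calc (1:ENNReal) = P univ := (measure_univ).symm
        _ ≤ P (Function.support (Y 0)) + P (Function.support (Y 0))ᶜ :=
            le_trans (measure_mono (by simp)) (measure_union_le _ _)
        _ = 0 := by rw [h0, hnull, add_zero]
    simp at this
  -- SLLN for Y : a.e. the partial sums of X tend to infinity
  have hslln := strong_law_ae_real Y hYint hYindep hYident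
  have htend : ∀ᵐ ω ∂P, Tendsto (fun n => S n ω) atTop atTop := by
    filter_upwards [hslln, hposall] with ω h1 h2
    have hYtend : Tendsto (fun n : ℕ => ∑ i ∈ Finset.range n, Y i ω) atTop atTop := by
      refine Tendsto.num tendsto_natCast_atTop_atTop hmean ?_
      exact h1
    refine tendsto_atTop_mono ?_ hYtend
    intro n
    exact Finset.sum_le_sum (fun i _ => hYle i ω (h2 i))
  -- the tail estimate
  have htail : ∃ N : ℕ, ∀ n, N ≤ n →
      P {ω | S n ω ≤ D + 1} < ENNReal.ofReal ε := by
    set T₁ : Set Ω := ⋂ i, {ω | 0 < X i ω} with hT₁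
    have hT₁meas : MeasurableSet T₁ :=
      MeasurableSet.iInter (fun i => measurableSet_lt measurable_const (hXmeas i))
    have hT₁null : P T₁ᶜ = 0 := by
      rw [hT₁, compl_iInter]
      refine measure_iUnion_null (fun i => ?_)
      have : {ω | 0 < X i ω}ᶜ = {ω | ¬ 0 < X i ω} := by ext ω; simp
      rw [this]
      exact ae_iff.1 (hposi i)
    set B : ℕ → Set Ω := fun n => {ω | S n ω ≤ D + 1} ∩ T₁ with hB
    have hBmeas : ∀ n, MeasurableSet (B n) :=
      fun n => (measurableSet_le (hSmeas n) measurable_const).inter hT₁meas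
    have hBanti : Antitone B := by
      intro m n hmn
      rintro ω ⟨h1, h2⟩
      refine ⟨?_, h2⟩
      have hmono : S m ω ≤ S n ω := by
        refine Finset.sum_le_sum_of_subset_of_nonneg
          (Finset.range_subset_range.2 hmn) (fun i _ _ => ?_)
        have := h2
        simp only [hT₁, mem_iInter, mem_setOf_eq] at this
        exact (this i).le
      exact le_trans hmono h1
    have hInull : P (⋂ n, B n) = 0 := by
      refine measure_mono_null ?_ (ae_iff.1 htend)
      intro ω hω
      simp only [mem_iInter, hB, mem_inter_iff, mem_setOf_eq] at hω
      simp only [mem_setOf_eq]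
      intro htt
      obtain ⟨n, hn⟩ := (tendsto_atTop.1 htt (D + 2)).exists
      have := (hω n).1
      linarith
    have hlim : Tendsto (fun n => P (B n)) atTop (𝓝 0) := by
      have := tendsto_measure_iInter_atTop (μ := P)
        (fun n => (hBmeas n).nullMeasurableSet) hBanti ⟨0, measure_ne_top _ _⟩
      rwa [hInull] at this
    obtain ⟨N, hN⟩ := (hlim.eventually_lt_const hεE).exists_forall_of_atTop
    refine ⟨N, fun n hn => ?_⟩
    have : P {ω | S n ω ≤ D + 1} = P (B n) := (measure_inter_conull hT₁null).symm
    rw [this]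
    exact hN n hn
  obtain ⟨N, hN⟩ := htail
  -- small-interval estimate for each fixed n
  have hsmall : ∀ n : ℕ, ∃ δ : ℝ, 0 < δ ∧
      P {ω | D ≤ S n ω ∧ S n ω ≤ D + δ} < ENNReal.ofReal ε := by
    intro n
    match n with
    | 0 =>
      refine ⟨1, one_pos, ?_⟩
      have : {ω | D ≤ S 0 ω ∧ S 0 ω ≤ D + 1} = ∅ := by
        ext ω
        simp only [hS, Finset.range_zero, Finset.sum_empty, mem_setOf_eq, mem_empty_iff_false,
          iff_false, not_and]
        intro h; linarith
      rw [this, measure_empty]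
      exact hεE
    | (m + 1) =>
      set C : ℕ → Set Ω := fun k =>
        {ω | D ≤ S (m+1) ω ∧ S (m+1) ω ≤ D + 1 / (k + 1)} with hC
      have hCmeas : ∀ k, MeasurableSet (C k) :=
        fun k => (measurableSet_le measurable_const (hSmeas (m+1))).inter
          (measurableSet_le (hSmeas (m+1)) measurable_const)
      have hCanti : Antitone C := by
        intro k l hkl
        rintro ω ⟨h1, h2⟩
        refine ⟨h1, le_trans h2 ?_⟩
        have : (1:ℝ) / (l + 1) ≤ 1 / (k + 1) := by
          apply one_div_le_one_div_of_le
          · positivity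
          · have : (k:ℝ) ≤ l := Nat.cast_le.2 hkl
            linarith
        linarith
      have hCnull : P (⋂ k, C k) = 0 := by
        refine measure_mono_null ?_
          (aux_sum_atomless P ν X hXmeas hXlaw hXindep m D)
        intro ω hω
        simp only [mem_iInter, hC, mem_setOf_eq] at hω
        have h1 : D ≤ S (m+1) ω := (hω 0).1
        have h2 : S (m+1) ω ≤ D := by
          by_contra h
          push_neg at h
          obtain ⟨k, hk⟩ := exists_nat_one_div_lt (sub_pos.2 h)
          have := (hω k).2
          have : S (m+1) ω - D ≤ 1 / (k + 1) := by linarith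
          linarith
        exact le_antisymm h2 h1
      have hlim : Tendsto (fun k => P (C k)) atTop (𝓝 0) := by
        have := tendsto_measure_iInter_atTop (μ := P)
          (fun k => (hCmeas k).nullMeasurableSet) hCanti ⟨0, measure_ne_top _ _⟩
        rwa [hCnull] at this
      obtain ⟨k, hk⟩ := (hlim.eventually_lt_const hεE).exists
      exact ⟨1 / (k + 1), by positivity, hk⟩
  choose F hFpos hFlt using hsmall
  -- take the minimum over n ≤ N together with 1
  set δ : ℝ := min 1 ((Finset.range (N+1)).inf' Finset.nonempty_range_add_one F) with hδ
  have hδpos : 0 < δ := by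
    refine lt_min one_pos ?_
    rw [Finset.lt_inf'_iff]
    exact fun i _ => hFpos i
  refine ⟨δ, hδpos, fun n hn => ?_⟩
  have hfin : P {ω | D ≤ S n ω ∧ S n ω ≤ D + δ} < ENNReal.ofReal ε := by
    rcases le_or_gt n N with hcase | hcase
    · -- n ≤ N : use the chosen δ for this n
      refine lt_of_le_of_lt (measure_mono ?_) (hFlt n)
      rintro ω ⟨h1, h2⟩
      refine ⟨h1, le_trans h2 ?_⟩
      have : δ ≤ F n := le_trans (min_le_right _ _)
        (Finset.inf'_le F (Finset.mem_range.2 (Nat.lt_succ_of_le hcase)))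
      linarith
    · -- n > N : use the tail estimate
      refine lt_of_le_of_lt (measure_mono ?_) (hN n hcase.le)
      rintro ω ⟨_, h2⟩
      have : δ ≤ 1 := min_le_left _ _
      simp only [mem_setOf_eq]
      linarith
  exact ENNReal.toReal_lt_of_lt_ofReal hfin
end

section
/- Let λ > 0, let ν be an atomless probability measure concentrated on (0,∞) with cumulative distribution function F, let T > 0, and let L(s) = Σ_{i=1}^∞ X_i·I(T_i ≤ s) be the compound Poisson process with rate λ and jump law ν, where T_i = E_1 + ⋯ + E_i with (E_j)_{j≥1} i.i.d. exponential with rate λ, and (X_i)_{i≥1} i.i.d. with law ν, independent of (E_j). Then the map D ↦ E[ ∫_0^T (1 − F(D − L(s)))·I(L(s) < D) ds ] is continuous on (0,∞). -/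
open MeasureTheory ProbabilityTheory Set intervalIntegral Filter Topology
open scoped ENNReal

section Aux

lemma cat_cdf_continuous (ν : Measure ℝ) [IsProbabilityMeasure ν] [NullSingletonClass ν] :
    Continuous (cdf ν) := by
  rw [continuous_iff_continuousAt]
  intro x
  have h2 : ν {x} = 0 := measure_singleton x
  rw [← measure_cdf (μ := ν), StieltjesFunction.measure_singleton] at h2
  have hle : Function.leftLim (cdf ν) x ≤ cdf ν x :=
    (monotone_cdf (μ := ν)).leftLim_le le_rfl
  have h3 : cdf ν x - Function.leftLim (cdf ν) x ≤ 0 := by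
    by_contra h
    push_neg at h
    exact (ENNReal.ofReal_pos.mpr h).ne' h2
  have heq : Function.leftLim (cdf ν) x = cdf ν x := le_antisymm hle (by linarith)
  rw [(monotone_cdf (μ := ν)).continuousAt_iff_leftLim_eq_rightLim, heq, (cdf ν).rightLim_eq]

lemma cat_contAt (ν : Measure ℝ) [IsProbabilityMeasure ν] [NullSingletonClass ν] {l D₀ : ℝ} (h : l ≠ D₀) :
    ContinuousAt (fun D => (1 - cdf ν (D - l)) * (if l < D then (1:ℝ) else 0)) D₀ := by
  rcases h.lt_or_gt with hlt | hgt
  · have hc : ContinuousAt (fun D => 1 - cdf ν (D - l)) D₀ :=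
      (continuous_const.sub ((cat_cdf_continuous ν).comp
        (continuous_id.sub continuous_const))).continuousAt
    apply hc.congr
    filter_upwards [Ioi_mem_nhds hlt] with D hD
    rw [if_pos (mem_Ioi.mp hD), mul_one]
  · apply ContinuousAt.congr (f := fun _ : ℝ => (0:ℝ)) continuousAt_const
    filter_upwards [Iio_mem_nhds hgt] with D hD
    rw [if_neg (not_lt.mpr (le_of_lt (mem_Iio.mp hD))), mul_zero]

lemma cat_add_eq_null {Ω : Type*} [MeasurableSpace Ω] (P : Measure Ω) [IsProbabilityMeasure P]
    {Y Z : Ω → ℝ} (hY : Measurable Y) (hZ : Measurable Z)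
    (ν : Measure ℝ) [IsProbabilityMeasure ν] [NullSingletonClass ν]
    (hlaw : P.map Z = ν) (hind : ProbabilityTheory.IndepFun Y Z P) (c : ℝ) :
    P {ω | Y ω + Z ω = c} = 0 := by
  have hmap : P.map (fun ω => (Y ω, Z ω)) = (P.map Y).prod (P.map Z) :=
    (ProbabilityTheory.indepFun_iff_map_prod_eq_prod_map_map hY.aemeasurable
      hZ.aemeasurable).mp hind
  have hs : MeasurableSet {p : ℝ × ℝ | p.1 + p.2 = c} :=
    (measurable_fst.add measurable_snd) (measurableSet_singleton c)
  have h1 : {ω | Y ω + Z ω = c} = (fun ω => (Y ω, Z ω)) ⁻¹' {p | p.1 + p.2 = c} := rfl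
  haveI : IsProbabilityMeasure (P.map Y) := Measure.isProbabilityMeasure_map hY.aemeasurable
  haveI : IsProbabilityMeasure (P.map Z) := Measure.isProbabilityMeasure_map hZ.aemeasurable
  rw [h1, ← Measure.map_apply (hY.prodMk hZ) hs, hmap, hlaw, Measure.prod_apply hs]
  have hz : ∀ x : ℝ, ν (Prod.mk x ⁻¹' {p : ℝ × ℝ | p.1 + p.2 = c}) = 0 := by
    intro x
    have hpre : Prod.mk x ⁻¹' {p : ℝ × ℝ | p.1 + p.2 = c} = {c - x} := by
      ext y
      simp only [mem_preimage, mem_setOf_eq, mem_singleton_iff]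
      constructor <;> intro h <;> linarith
    rw [hpre]
    exact measure_singleton _
  rw [lintegral_congr hz]
  simp

end Aux

/-- For a compound Poisson process `L(s) = Σ_i X_i·I(T_i ≤ s)` with rate
`λ > 0` (arrival times `T_i = E_1 + ⋯ + E_i`, `E_j` i.i.d. exponential with rate `λ`)
and atomless jump law `ν` concentrated on `(0,∞)` with cdf `F`, independent of the
arrivals, the map `D ↦ E[∫_0^T (1 − F(D − L(s)))·I(L(s) < D) ds]` is continuous on
`(0,∞)`. -/
theorem trigger_intensity_integral_continuous_in_threshold
    {Ω : Type*} [MeasurableSpace Ω] (P : Measure Ω) [IsProbabilityMeasure P]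
    (lam : ℝ) (hlam : 0 < lam) (T : ℝ) (hT : 0 < T)
    (ν : Measure ℝ) [IsProbabilityMeasure ν] [NullSingletonClass ν] (hν : ν (Iic 0) = 0)
    (E X : ℕ → Ω → ℝ)
    (hEmeas : ∀ j, Measurable (E j)) (hXmeas : ∀ i, Measurable (X i))
    (hElaw : ∀ j, P.map (E j) = expMeasure lam)
    (hXlaw : ∀ i, P.map (X i) = ν)
    (hEindep : iIndepFun E P)
    (hXindep : iIndepFun X P)
    (hEX : IndepFun (fun ω j => E j ω : Ω → ℕ → ℝ) (fun ω i => X i ω : Ω → ℕ → ℝ) P)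
    (A : ℕ → Ω → ℝ) (hA : ∀ i ω, A i ω = ∑ j ∈ Finset.range (i + 1), E j ω)
    (L : ℝ → Ω → ℝ) (hL : ∀ s ω, L s ω = ∑' i, if A i ω ≤ s then X i ω else 0) :
    ContinuousOn (fun D : ℝ =>
        ∫ ω, (∫ s in (0:ℝ)..T,
          (1 - cdf ν (D - L s ω)) * (if L s ω < D then 1 else 0)) ∂P)
      (Ioi 0) := by
  classical
  haveI hexp : IsProbabilityMeasure (expMeasure lam) := isProbabilityMeasure_expMeasure hlam
  set μ : Measure ℝ := volume.restrict (Ioc (0:ℝ) T) with hμdef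
  haveI : IsFiniteMeasure μ := by
    constructor
    rw [hμdef, Measure.restrict_apply_univ]
    exact measure_Ioc_lt_top
  have hAmeas : ∀ i, Measurable (A i) := by
    intro i
    have : A i = fun ω => ∑ j ∈ Finset.range (i + 1), E j ω := funext fun ω => hA i ω
    rw [this]
    exact Finset.measurable_sum _ fun j _ => hEmeas j
  -- Almost surely, all interarrival times are positive.
  have hEpos : ∀ᵐ ω ∂P, ∀ j, 0 < E j ω := by
    rw [ae_all_iff]
    intro j
    rw [ae_iff]
    have hset : {ω | ¬ 0 < E j ω} = E j ⁻¹' (Iic 0) := by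
      ext ω; simp
    rw [hset, ← Measure.map_apply (hEmeas j) measurableSet_Iic, hElaw j]
    rw [← ofReal_cdf (μ := expMeasure lam) 0]
    have h0 : cdf (expMeasure lam) 0 = 0 := by
      have h := cdf_expMeasure_eq hlam (0:ℝ)
      rw [h]
      simp
    rw [h0, ENNReal.ofReal_zero]
  -- Almost surely, the arrival times are unbounded.
  have hAgrow : ∀ᵐ ω ∂P, ∀ m : ℕ, ¬ ((∀ j, 0 < E j ω) ∧ ∀ i, A i ω ≤ (m:ℝ)) := by
    rw [ae_all_iff]
    intro m
    rw [ae_iff]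
    simp only [not_not]
    set c : ENNReal := expMeasure lam (Iic (m:ℝ)) with hc
    have hc1 : c < 1 := by
      rw [hc, ← ofReal_cdf (μ := expMeasure lam) (m:ℝ)]
      have h := cdf_expMeasure_eq hlam (m:ℝ)
      rw [h, if_pos (Nat.cast_nonneg m)]
      refine ENNReal.ofReal_lt_one.mpr ?_
      have := Real.exp_pos (-(lam * m))
      linarith
    have hball : ∀ n : ℕ, P {ω | (∀ j, 0 < E j ω) ∧ ∀ i, A i ω ≤ (m:ℝ)} ≤ c ^ (n + 1) := by
      intro n
      have hsub : {ω | (∀ j, 0 < E j ω) ∧ ∀ i, A i ω ≤ (m:ℝ)} ⊆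
          ⋂ j ∈ Finset.range (n + 1), E j ⁻¹' Iic (m:ℝ) := by
        rintro ω ⟨hpos, hbd⟩
        simp only [mem_iInter, mem_preimage, mem_Iic]
        intro j hj
        have h1 : E j ω ≤ ∑ k ∈ Finset.range (n + 1), E k ω :=
          Finset.single_le_sum (fun k _ => (hpos k).le) hj
        calc E j ω ≤ A n ω := by rw [hA]; exact h1
          _ ≤ (m:ℝ) := hbd n
      refine le_trans (measure_mono hsub) ?_
      have hprod := hEindep.meas_biInter (S := Finset.range (n + 1))
          (s := fun j => E j ⁻¹' Iic (m:ℝ))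
          (fun j _ => ⟨Iic (m:ℝ), measurableSet_Iic, rfl⟩)
      rw [hprod]
      have hval : ∀ j, P (E j ⁻¹' Iic (m:ℝ)) = c := by
        intro j
        rw [← Measure.map_apply (hEmeas j) measurableSet_Iic, hElaw j, hc]
      rw [Finset.prod_congr rfl fun j _ => hval j, Finset.prod_const, Finset.card_range]
    have htend : Tendsto (fun n : ℕ => c ^ (n + 1)) atTop (𝓝 0) :=
      (ENNReal.tendsto_pow_atTop_nhds_zero_of_lt_one hc1).comp (tendsto_add_atTop_nat 1)
    exact le_antisymm (ge_of_tendsto htend (Filter.Eventually.of_forall hball)) zero_le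
  have hGood : ∀ᵐ ω ∂P, (∀ j, 0 < E j ω) ∧ ∀ m : ℕ, ∃ i, (m:ℝ) < A i ω := by
    filter_upwards [hEpos, hAgrow] with ω hpos hgrow
    refine ⟨hpos, fun m => ?_⟩
    have := hgrow m
    push_neg at this
    obtain ⟨i, hi⟩ := this hpos
    exact ⟨i, hi⟩
  -- Structure of L on good points.
  have struct : ∀ ω, (∀ j, 0 < E j ω) → (∀ m : ℕ, ∃ i, (m:ℝ) < A i ω) → ∀ s : ℝ,
      ∃ n : ℕ, L s ω = ∑ i ∈ Finset.range n, X i ω ∧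
        Tendsto (fun k => ∑ i ∈ Finset.range k, if A i ω ≤ s then X i ω else 0) atTop
          (𝓝 (L s ω)) := by
    intro ω hpos hgrow s
    have hmono : StrictMono (fun i => A i ω) := by
      apply strictMono_nat_of_lt_succ
      intro i
      have hstep : A (i + 1) ω = A i ω + E (i + 1) ω := by
        rw [hA, hA, Finset.sum_range_succ]
      rw [hstep]
      linarith [hpos (i + 1)]
    obtain ⟨m, hm⟩ := exists_nat_ge s
    obtain ⟨i₀, hi₀⟩ := hgrow m
    have hex : ∃ i, s < A i ω := ⟨i₀, lt_of_le_of_lt hm hi₀⟩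
    set n := Nat.find hex with hn
    have hub : ∀ i, n ≤ i → ¬ A i ω ≤ s := fun i hi =>
      not_le.mpr (lt_of_lt_of_le (Nat.find_spec hex) (hmono.monotone hi))
    have hlb : ∀ i, i < n → A i ω ≤ s := fun i hi => not_lt.mp (Nat.find_min hex hi)
    have hzero : ∀ i ∉ Finset.range n, (if A i ω ≤ s then X i ω else 0) = 0 := by
      intro i hi
      rw [if_neg (hub i (not_lt.mp (fun h => hi (Finset.mem_range.mpr h))))]
    have hsum : ∀ k, n ≤ k →
        (∑ i ∈ Finset.range k, if A i ω ≤ s then X i ω else 0)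
          = ∑ i ∈ Finset.range n, X i ω := by
      intro k hk
      rw [← Finset.sum_subset (Finset.range_subset_range.mpr hk)
        (fun i _ hi => hzero i hi)]
      exact Finset.sum_congr rfl fun i hi => if_pos (hlb i (Finset.mem_range.mp hi))
    have hLs : L s ω = ∑ i ∈ Finset.range n, X i ω := by
      rw [hL, tsum_eq_sum hzero]
      exact Finset.sum_congr rfl fun i hi => if_pos (hlb i (Finset.mem_range.mp hi))
    refine ⟨n, hLs, ?_⟩
    rw [hLs]
    exact tendsto_atTop_of_eventually_const hsum
  -- Null sets in the product.
  have hbadnull : ∀ (Q : Ω → Prop), (∀ᵐ ω ∂P, Q ω) →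
      (P.prod μ) {p : Ω × ℝ | ¬ Q p.1} = 0 := by
    intro Q hQ
    have hset : {p : Ω × ℝ | ¬ Q p.1} = {ω | ¬ Q ω} ×ˢ (univ : Set ℝ) := by
      ext p
      simp [Set.mem_prod]
    rw [hset, Measure.prod_prod]
    rw [ae_iff] at hQ
    rw [hQ, zero_mul]
  -- AE measurability of the compound process on the product space.
  have hLae : AEMeasurable (fun p : Ω × ℝ => L p.2 p.1) (P.prod μ) := by
    apply aemeasurable_of_tendsto_metrizable_ae'
      (f := fun n (p : Ω × ℝ) => ∑ i ∈ Finset.range n, if A i p.1 ≤ p.2 then X i p.1 else 0)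
    · intro n
      apply Measurable.aemeasurable
      apply Finset.measurable_sum
      intro i _
      exact Measurable.ite (measurableSet_le ((hAmeas i).comp measurable_fst) measurable_snd)
        ((hXmeas i).comp measurable_fst) measurable_const
    · rw [ae_iff]
      refine measure_mono_null ?_ (hbadnull _ hGood)
      intro p hp
      simp only [mem_setOf_eq] at hp ⊢
      intro hgood
      obtain ⟨n, _, ht⟩ := struct p.1 hgood.1 hgood.2 p.2
      exact hp ht
  -- Pointwise bounds and measurability of the integrand.
  have hφmeas : ∀ D : ℝ, Measurable (fun x : ℝ => (1 - cdf ν (D - x)) * (if x < D then (1:ℝ) else 0)) := by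
    intro D
    refine Measurable.mul ?_ ?_
    · exact measurable_const.sub ((cat_cdf_continuous ν).measurable.comp
        (measurable_const.sub measurable_id))
    · exact Measurable.ite (measurableSet_lt measurable_id measurable_const)
        measurable_const measurable_const
  have hFaesm : ∀ D : ℝ, AEStronglyMeasurable
      (fun p : Ω × ℝ => (1 - cdf ν (D - L p.2 p.1)) * (if L p.2 p.1 < D then (1:ℝ) else 0))
      (P.prod μ) :=
    fun D => ((hφmeas D).comp_aemeasurable hLae).aestronglyMeasurable
  have hbd : ∀ (D : ℝ) (p : Ω × ℝ),
      ‖(1 - cdf ν (D - L p.2 p.1)) * (if L p.2 p.1 < D then (1:ℝ) else 0)‖ ≤ 1 := by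
    intro D p
    rw [Real.norm_eq_abs, abs_mul]
    have h1 : |1 - cdf ν (D - L p.2 p.1)| ≤ 1 := by
      rw [abs_le]
      constructor
      · linarith [cdf_le_one (μ := ν) (D - L p.2 p.1)]
      · linarith [cdf_nonneg (μ := ν) (D - L p.2 p.1)]
    have h2 : |(if L p.2 p.1 < D then (1:ℝ) else 0)| ≤ 1 := by
      split <;> simp
    calc |1 - cdf ν (D - L p.2 p.1)| * |(if L p.2 p.1 < D then (1:ℝ) else 0)|
        ≤ 1 * 1 := mul_le_mul h1 h2 (abs_nonneg _) zero_le_one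
      _ = 1 := mul_one 1
  have hint : ∀ D : ℝ, Integrable
      (fun p : Ω × ℝ => (1 - cdf ν (D - L p.2 p.1)) * (if L p.2 p.1 < D then (1:ℝ) else 0))
      (P.prod μ) := by
    intro D
    exact (integrable_const (1:ℝ)).mono' (hFaesm D) (Filter.Eventually.of_forall (hbd D))
  -- Rewriting the iterated integral as an integral over the product.
  have hrw : (fun D : ℝ => ∫ ω, (∫ s in (0:ℝ)..T,
        (1 - cdf ν (D - L s ω)) * (if L s ω < D then 1 else 0)) ∂P)
      = fun D : ℝ => ∫ p, (1 - cdf ν (D - L p.2 p.1)) * (if L p.2 p.1 < D then (1:ℝ) else 0)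
          ∂(P.prod μ) := by
    funext D
    have h1 : ∀ ω, (∫ s in (0:ℝ)..T, (1 - cdf ν (D - L s ω)) * (if L s ω < D then 1 else 0))
        = ∫ s, (1 - cdf ν (D - L s ω)) * (if L s ω < D then (1:ℝ) else 0) ∂μ := by
      intro ω
      rw [intervalIntegral.integral_of_le hT.le]
    simp_rw [h1]
    exact integral_integral (hint D)
  rw [hrw]
  intro D₀ hD₀
  apply ContinuousAt.continuousWithinAt
  apply continuousAt_of_dominated (bound := fun _ => (1:ℝ))
  · exact Filter.Eventually.of_forall hFaesm
  · exact Filter.Eventually.of_forall fun D => Filter.Eventually.of_forall (hbd D)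
  · exact integrable_const 1
  · -- a.e. continuity in D at D₀
    have hSne : ∀ᵐ ω ∂P, ∀ n : ℕ, (∑ i ∈ Finset.range (n + 1), X i ω) ≠ D₀ := by
      rw [ae_all_iff]
      intro n
      rw [ae_iff]
      simp only [not_not]
      have hme : (0:ℕ) ∈ Finset.range (n + 1) := Finset.mem_range.mpr (Nat.succ_pos n)
      have hind : IndepFun (fun ω => ∑ i ∈ (Finset.range (n + 1)).erase 0, X i ω) (X 0) P := by
        have h0 := hXindep.indepFun_finsetSum_of_notMem hXmeas
          (Finset.notMem_erase 0 (Finset.range (n + 1)))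
        have hfe : (∑ j ∈ (Finset.range (n + 1)).erase 0, X j)
            = fun ω => ∑ i ∈ (Finset.range (n + 1)).erase 0, X i ω := by
          ext ω
          simp [Finset.sum_apply]
        rwa [hfe] at h0
    
      have hnull := cat_add_eq_null P
        (Finset.measurable_sum _ fun i _ => hXmeas i) (hXmeas 0) ν (hXlaw 0) hind D₀
      have hev : {ω | (∑ i ∈ Finset.range (n + 1), X i ω) = D₀}
          = {ω | (∑ i ∈ (Finset.range (n + 1)).erase 0, X i ω) + X 0 ω = D₀} := by
        ext ω
        simp only [mem_setOf_eq]
        rw [Finset.sum_erase_add _ _ hme]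
      rw [hev]
      exact hnull
    have hGood2 : ∀ᵐ ω ∂P, ∀ s : ℝ, L s ω ≠ D₀ := by
      filter_upwards [hGood, hSne] with ω hg hs s
      obtain ⟨n, hLn, _⟩ := struct ω hg.1 hg.2 s
      rw [hLn]
      cases n with
      | zero =>
        simp only [Finset.range_zero, Finset.sum_empty]
        exact fun h => (ne_of_gt hD₀) h.symm
      | succ k => exact hs k
    rw [ae_iff]
    refine measure_mono_null ?_ (hbadnull _ hGood2)
    intro p hp
    simp only [mem_setOf_eq] at hp ⊢
    intro hgood
    exact hp (cat_contAt ν (hgood p.2))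
end

section
/- Let ν be an atomless probability measure concentrated on (0,∞), let (X_i)_{i≥1} be i.i.d. with law ν, and for m > 0 let N_m ~ Poisson(m) be independent of (X_i). Define p(m, D) = P( Σ_{i=1}^{N_m} X_i ≥ D ). Then the map (m, D) ↦ p(m, D) is jointly continuous on (0,∞) × (0,∞). -/
open MeasureTheory ProbabilityTheory Set

namespace CPAux

open Filter Topology
open scoped ENNReal NNReal

/-- The law of the sum of `n` i.i.d. random variables with law `ν`. -/
noncomputable def sumLaw (ν : Measure ℝ) (n : ℕ) : Measure ℝ :=
  Measure.map (fun x : Fin n → ℝ => ∑ i, x i) (Measure.pi fun _ => ν)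

lemma measurable_finSum (n : ℕ) : Measurable (fun x : Fin n → ℝ => ∑ i, x i) :=
  Finset.measurable_sum _ fun i _ => measurable_pi_apply i

variable (ν : Measure ℝ) [IsProbabilityMeasure ν]

instance (n : ℕ) : IsProbabilityMeasure (sumLaw ν n) :=
  Measure.isProbabilityMeasure_map (measurable_finSum n).aemeasurable

lemma sumLaw_singleton [NullSingletonClass ν] (n : ℕ) (c : ℝ) : sumLaw ν (n + 1) {c} = 0 := by
  have hmp := (measurePreserving_piFinSuccAbove (fun _ : Fin (n + 1) => ν) 0).symm
  set e := MeasurableEquiv.piFinSuccAbove (fun _ : Fin (n + 1) => ℝ) 0 with he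
  have hs : MeasurableSet ((fun x : Fin (n + 1) → ℝ => ∑ i, x i) ⁻¹' {c}) :=
    measurable_finSum (n + 1) (measurableSet_singleton c)
  rw [sumLaw, Measure.map_apply (measurable_finSum (n + 1)) (measurableSet_singleton c),
    ← hmp.map_eq, Measure.map_apply hmp.measurable hs]
  have hpre : e.symm ⁻¹' ((fun x : Fin (n + 1) → ℝ => ∑ i, x i) ⁻¹' {c})
      = {p : ℝ × (Fin n → ℝ) | p.1 + ∑ j, p.2 j = c} := by
    ext p
    simp only [mem_preimage, mem_singleton_iff, mem_setOf_eq, he,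
      MeasurableEquiv.piFinSuccAbove_symm_apply, Fin.insertNthEquiv, Equiv.coe_fn_mk,
      Fin.insertNth_zero', Fin.sum_cons]
  rw [hpre]
  have hset : MeasurableSet {p : ℝ × (Fin n → ℝ) | p.1 + ∑ j, p.2 j = c} := by
    have : Measurable (fun p : ℝ × (Fin n → ℝ) => p.1 + ∑ j, p.2 j) :=
      measurable_fst.add ((measurable_finSum n).comp measurable_snd)
    exact this (measurableSet_singleton c)
  rw [Measure.prod_apply_symm hset]
  have hslice : ∀ y : Fin n → ℝ,
      ((fun x : ℝ => (x, y)) ⁻¹' {p : ℝ × (Fin n → ℝ) | p.1 + ∑ j, p.2 j = c})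
        = {c - ∑ j, y j} := by
    intro y
    ext x
    simp [eq_sub_iff_add_eq]
  simp only [hslice, measure_singleton, lintegral_zero]

lemma sumLaw_zero_apply {D : ℝ} (hD : 0 < D) : sumLaw ν 0 (Ici D) = 0 := by
  rw [sumLaw]
  have h0 : (fun x : Fin 0 → ℝ => ∑ i, x i) = fun _ => (0 : ℝ) := by
    funext x; simp
  rw [h0, Measure.map_const, measure_univ, one_smul,
    Measure.dirac_apply' _ measurableSet_Ici]
  simp [Set.indicator_apply, not_le.2 hD]

/-- Continuity of the upper tail of an atomless finite measure on `ℝ`. -/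
lemma continuous_tail (μ : Measure ℝ) [IsFiniteMeasure μ] [NullSingletonClass μ] :
    Continuous fun x => (μ (Ici x)).toReal := by
  rw [continuous_iff_seqContinuous]
  intro y x hy
  have key : Tendsto (fun k => μ (Ici (y k))) atTop (𝓝 (μ (Ici x))) := by
    have h1 : ∀ t : ℝ, μ (Ici t) = ∫⁻ z, (Ici t).indicator 1 z ∂μ := fun t =>
      (lintegral_indicator_one measurableSet_Ici).symm
    simp_rw [h1]
    apply tendsto_lintegral_of_dominated_convergence (fun _ => (1 : ℝ≥0∞))
    · exact fun k => measurable_one.indicator measurableSet_Ici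
    · refine fun k => Eventually.of_forall fun z => ?_
      by_cases h : z ∈ Ici (y k) <;> simp [Set.indicator_apply, h]
    · simp [lintegral_one]
    · filter_upwards [compl_mem_ae_iff.2 (measure_singleton x)] with z hz
      have hzx : z ≠ x := by simpa using hz
      rcases hzx.lt_or_gt with hlt | hgt
      · -- z < x : both indicators eventually 0
        refine Tendsto.congr' ?_ tendsto_const_nhds
        filter_upwards [hy.eventually_const_lt hlt] with k hk
        simp [Set.indicator_apply, not_le.2 hk, not_le.2 hlt]
      · -- x < z : both indicators eventually 1
        refine Tendsto.congr' ?_ tendsto_const_nhds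
        filter_upwards [hy.eventually_lt_const hgt] with k hk
        simp [Set.indicator_apply, hk.le, hgt.le]
  exact (ENNReal.tendsto_toReal (measure_ne_top μ _)).comp key

omit [IsProbabilityMeasure ν] in
lemma cpl_apply (m D : ℝ) :
    compoundPoissonLaw m ν (Ici D)
      = ∑' n, poissonPMF m.toNNReal n * sumLaw ν n (Ici D) := by
  rw [compoundPoissonLaw,
    Measure.bind_apply measurableSet_Ici measurable_from_nat.aemeasurable,
    poissonMeasure, lintegral_countable']
  congr 1
  ext n
  rw [Measure.sum_smul_dirac_singleton, mul_comm]
  rfl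

lemma cpl_toReal (m D : ℝ) :
    (compoundPoissonLaw m ν (Ici D)).toReal
      = ∑' n, poissonPMFReal m.toNNReal n * (sumLaw ν n (Ici D)).toReal := by
  rw [cpl_apply, ENNReal.tsum_toReal_eq]
  · congr 1
    ext n
    rw [ENNReal.toReal_mul]
    congr 1
    show (ENNReal.ofReal (poissonPMFReal m.toNNReal n)).toReal = _
    exact ENNReal.toReal_ofReal poissonPMFReal_nonneg
  · intro n
    exact ENNReal.mul_ne_top ENNReal.ofReal_ne_top (measure_ne_top _ _)

end CPAux

open CPAux Filter Topology

/-- For an atomless jump law `ν` concentrated on `(0,∞)`, the trigger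
probability `p(m, D) = P(Σ_{i=1}^{N_m} X_i ≥ D)` of a compound Poisson variable with
intensity `m` is jointly continuous in `(m, D)` on `(0,∞) × (0,∞)`. -/
theorem compound_poisson_trigger_probability_jointly_continuous
    (ν : Measure ℝ) [IsProbabilityMeasure ν] [NullSingletonClass ν] (hν : ν (Iic 0) = 0) :
    ContinuousOn (fun q : ℝ × ℝ => ((compoundPoissonLaw q.1 ν) (Ici q.2)).toReal)
      (Ioi 0 ×ˢ Ioi 0) := by
  have hF : (fun q : ℝ × ℝ => ((compoundPoissonLaw q.1 ν) (Ici q.2)).toReal)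
      = fun q : ℝ × ℝ =>
        ∑' n, poissonPMFReal q.1.toNNReal n * (sumLaw ν n (Ici q.2)).toReal :=
    funext fun q => cpl_toReal ν q.1 q.2
  rw [hF]
  intro q hq
  set M : ℝ := q.1 + 1 with hM
  have hqM : q ∈ Ioo (0 : ℝ) M ×ˢ Ioi (0 : ℝ) := ⟨⟨hq.1, lt_add_one _⟩, hq.2⟩
  have hopen : IsOpen (Ioo (0 : ℝ) M ×ˢ Ioi (0 : ℝ)) := isOpen_Ioo.prod isOpen_Ioi
  have hco : ContinuousOn
      (fun p : ℝ × ℝ =>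
        ∑' n, poissonPMFReal p.1.toNNReal n * (sumLaw ν n (Ici p.2)).toReal)
      (Ioo (0 : ℝ) M ×ˢ Ioi (0 : ℝ)) := by
    apply continuousOn_tsum (u := fun n : ℕ => M ^ n / n.factorial)
    · intro n
      match n with
      | 0 =>
        refine ContinuousOn.congr (continuousOn_const (c := (0:ℝ))) fun p hp => ?_
        have hp2 : (0 : ℝ) < p.2 := hp.2
        rw [sumLaw_zero_apply ν hp2]
        simp
      | (n + 1) =>
        have hna : NullSingletonClass (sumLaw ν (n + 1)) := ⟨fun c => sumLaw_singleton ν n c⟩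
        have hcont : Continuous fun p : ℝ × ℝ =>
            Real.exp (-p.1) * p.1 ^ (n + 1) / (n + 1).factorial
              * (sumLaw ν (n + 1) (Ici p.2)).toReal :=
          (((Real.continuous_exp.comp continuous_fst.neg).mul
            (continuous_fst.pow _)).div_const _).mul
            ((continuous_tail (sumLaw ν (n + 1))).comp continuous_snd)
      
        refine hcont.continuousOn.congr fun p hp => ?_
        have hp1 : (0 : ℝ) < p.1 := hp.1.1
        simp only [poissonPMFReal, Real.coe_toNNReal _ hp1.le]
    · exact Real.summable_pow_div_factorial M
    · intro n p hp
      have hp1 : (0 : ℝ) < p.1 := hp.1.1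
      have hpM : p.1 < M := hp.1.2
      have hM0 : (0 : ℝ) < M := hp1.trans hpM
      have ht0 : 0 ≤ (sumLaw ν n (Ici p.2)).toReal := ENNReal.toReal_nonneg
      have ht1 : (sumLaw ν n (Ici p.2)).toReal ≤ 1 :=
        ENNReal.toReal_le_of_le_ofReal zero_le_one (by simpa using prob_le_one)
      rw [Real.norm_eq_abs, abs_of_nonneg (mul_nonneg poissonPMFReal_nonneg ht0)]
      calc poissonPMFReal p.1.toNNReal n * (sumLaw ν n (Ici p.2)).toReal
          ≤ poissonPMFReal p.1.toNNReal n * 1 :=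
            mul_le_mul_of_nonneg_left ht1 poissonPMFReal_nonneg
        _ = Real.exp (-p.1) * p.1 ^ n / n.factorial := by
            simp [poissonPMFReal, Real.coe_toNNReal _ hp1.le]
        _ ≤ 1 * M ^ n / n.factorial := by
            gcongr
            calc Real.exp (-p.1) ≤ Real.exp 0 :=
              Real.exp_le_exp.2 (neg_nonpos.2 hp1.le)
              _ = 1 := Real.exp_zero
        _ = M ^ n / n.factorial := by ring
  exact ((hco.continuousAt (hopen.mem_nhds hqM)).continuousWithinAt)
end

section
/- Let λ, t > 0, μ ∈ ℝ, σ > 0, a, b ∈ ℝ, and D ∈ ℝ. Let L = Σ_{i=1}^{N} exp(Y_i) be a compound Poisson random variable with N ~ Poisson(λt) and (Y_i) i.i.d. normal N(μ, σ²), independent of N; and let L' = Σ_{i=1}^{N'} exp(Y'_i) with N' ~ Poisson(λt·e^a) and (Y'_i) i.i.d. normal N(μ + b, σ²), independent of N'. Then E[ I(L' ≥ D)·exp(λt(e^a − 1) − a·N')·exp((b²/(2σ²))·N')·exp(−(b/σ²)·Σ_{i=1}^{N'}(Y'_i − μ)) ] = P(L ≥ D). -/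
open MeasureTheory ProbabilityTheory Set
open scoped ENNReal NNReal

namespace LogIS

noncomputable def tilt (b σ μ : ℝ) (y : ℝ) : ℝ≥0∞ :=
  ENNReal.ofReal (Real.exp (b^2 / (2 * σ^2) - b / σ^2 * (y - μ)))

lemma measurable_tilt (b σ μ : ℝ) : Measurable (tilt b σ μ) := by
  unfold tilt
  exact (Real.measurable_exp.comp
    (measurable_const.sub ((measurable_id.sub_const μ).const_mul (b / σ^2)))).ennreal_ofReal

/-- Tonelli for a finite product of a single probability measure on ℝ. -/
lemma lintegral_pi_prod : ∀ (n : ℕ) (μ : Measure ℝ) (_ : IsProbabilityMeasure μ)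
    (f : Fin n → ℝ → ℝ≥0∞) (_ : ∀ i, Measurable (f i)),
    ∫⁻ y : Fin n → ℝ, ∏ i, f i (y i) ∂(Measure.pi fun _ => μ) = ∏ i, ∫⁻ x, f i x ∂μ := by
  intro n
  induction n with
  | zero =>
    intro μ hμ f hf
    simp only [Finset.univ_eq_empty, Finset.prod_empty, lintegral_one]
    simp
  | succ n ih =>
    intro μ hμ f hf
    have hmp := (measurePreserving_piFinSuccAbove (fun _ : Fin (n+1) => (μ : Measure ℝ)) 0).symm
    have hg : Measurable fun y : Fin (n+1) → ℝ => ∏ i, f i (y i) :=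
      Finset.measurable_prod _ fun i _ => (hf i).comp (measurable_pi_apply i)
    rw [← hmp.lintegral_comp hg]
    have heq : ∀ z : ℝ × (Fin n → ℝ),
        (∏ i, f i (((MeasurableEquiv.piFinSuccAbove (fun _ => ℝ) 0).symm z) i))
          = f 0 z.1 * ∏ j : Fin n, f j.succ (z.2 j) := by
      intro z
      simp only [MeasurableEquiv.piFinSuccAbove_symm_apply, Fin.insertNthEquiv,
        Equiv.coe_fn_mk, Fin.insertNth_zero]
      rw [Fin.prod_univ_succ]
      simp [Fin.cons_zero, Fin.cons_succ]
    calc ∫⁻ z, (∏ i, f i (((MeasurableEquiv.piFinSuccAbove (fun _ => ℝ) 0).symm z) i))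
            ∂((μ : Measure ℝ).prod (Measure.pi fun _ : Fin n => μ))
        = ∫⁻ z, f 0 z.1 * ∏ j : Fin n, f j.succ (z.2 j)
            ∂((μ : Measure ℝ).prod (Measure.pi fun _ : Fin n => μ)) := by
          exact lintegral_congr heq
      _ = (∫⁻ x, f 0 x ∂μ) * ∫⁻ y : Fin n → ℝ, ∏ j : Fin n, f j.succ (y j)
            ∂(Measure.pi fun _ : Fin n => μ) := by
          exact lintegral_prod_mul (hf 0).aemeasurable
            (Finset.measurable_prod _ fun (j : Fin n) _ =>
              (hf j.succ).comp (measurable_pi_apply j)).aemeasurable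
      _ = ∏ i, ∫⁻ x, f i x ∂μ := by
          rw [ih μ hμ (fun j => f j.succ) (fun j => hf j.succ), Fin.prod_univ_succ]

/-- The law of the vector of the first `n` coordinates of an i.i.d. sequence. -/
lemma map_fin_pi {Ω : Type*} [MeasurableSpace Ω] (P : Measure Ω) [IsProbabilityMeasure P]
    (Y : ℕ → Ω → ℝ) (hYmeas : ∀ i, Measurable (Y i))
    (hYindep : iIndepFun Y P)
    (ν : Measure ℝ) [IsProbabilityMeasure ν] (hlaw : ∀ i, P.map (Y i) = ν) (n : ℕ) :
    P.map (fun ω => fun i : Fin n => Y i ω) = Measure.pi (fun _ => ν) := by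
  classical
  refine (Measure.pi_eq fun s hs => ?_).symm
  have hV : Measurable (fun ω => fun i : Fin n => Y i ω) :=
    measurable_pi_lambda _ fun i => hYmeas i
  rw [Measure.map_apply hV (MeasurableSet.univ_pi hs)]
  set sets : ℕ → Set ℝ := fun i => if h : i < n then s ⟨i, h⟩ else Set.univ with hsets
  have hpre : (fun ω => fun i : Fin n => Y i ω) ⁻¹' (Set.pi Set.univ s)
      = ⋂ i ∈ Finset.range n, Y i ⁻¹' sets i := by
    ext ω
    simp only [Set.mem_preimage, Set.mem_pi, Set.mem_univ, forall_true_left, Set.mem_iInter,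
      Finset.mem_range]
    constructor
    · intro h i hi
      simp only [hsets, dif_pos hi]
      exact h ⟨i, hi⟩
    · intro h i
      have := h i i.isLt
      simpa only [hsets, dif_pos i.isLt] using this
  rw [hpre, hYindep.measure_inter_preimage_eq_mul (Finset.range n)
    (fun i _ => by by_cases h : i < n <;> simp [hsets, h, hs])]
  have : ∀ i ∈ Finset.range n, P (Y i ⁻¹' sets i) = ν (sets i) := by
    intro i hi
    rw [← hlaw i, Measure.map_apply (hYmeas i)]
    by_cases h : i < n <;> simp [hsets, h, hs]
  rw [Finset.prod_congr rfl this]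
  rw [← Fin.prod_univ_eq_prod_range (fun i => ν (sets i)) n]
  exact Finset.prod_congr rfl fun i _ => by simp [hsets, i.isLt]

/-- Exponential tilting of a Gaussian. -/
lemma gaussian_tilt {σ : ℝ} (hσ : 0 < σ) (μ b : ℝ) :
    (gaussianReal (μ + b) (σ^2).toNNReal).withDensity (tilt b σ μ)
      = gaussianReal μ (σ^2).toNNReal := by
  have hσ2 : (σ:ℝ)^2 ≠ 0 := by positivity
  have hv : (σ^2).toNNReal ≠ 0 := by
    simp only [ne_eq, Real.toNNReal_eq_zero, not_le]
    positivity
  have hvr : (((σ^2).toNNReal : ℝ≥0) : ℝ) = σ^2 := Real.coe_toNNReal _ (sq_nonneg σ)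
  rw [gaussianReal_of_var_ne_zero _ hv, gaussianReal_of_var_ne_zero _ hv,
    ← withDensity_mul _ (measurable_gaussianPDF _ _) (measurable_tilt b σ μ)]
  congr 1
  funext y
  simp only [Pi.mul_apply, gaussianPDF, tilt]
  rw [← ENNReal.ofReal_mul (gaussianPDFReal_nonneg _ _ _)]
  congr 1
  simp only [gaussianPDFReal, hvr]
  rw [mul_assoc, ← Real.exp_add]
  congr 2
  field_simp
  ring

/-- Product-density tilting of a finite product measure. -/
lemma pi_withDensity_prod (n : ℕ) (ν' ν : Measure ℝ) [IsProbabilityMeasure ν']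
    [IsProbabilityMeasure ν] (ρ : ℝ → ℝ≥0∞) (hρ : Measurable ρ)
    (hd : ν'.withDensity ρ = ν) :
    (Measure.pi fun _ : Fin n => ν').withDensity (fun y => ∏ i, ρ (y i))
      = Measure.pi fun _ : Fin n => ν := by
  refine (Measure.pi_eq fun s hs => ?_).symm
  rw [withDensity_apply _ (MeasurableSet.univ_pi hs), ← lintegral_indicator (MeasurableSet.univ_pi hs)]
  have hind : ∀ y : Fin n → ℝ,
      (Set.univ.pi s).indicator (fun y : Fin n → ℝ => ∏ i, ρ (y i)) y
        = ∏ i, (s i).indicator ρ (y i) := by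
    intro y
    by_cases hy : y ∈ Set.univ.pi s
    · rw [Set.indicator_of_mem hy]
      exact Finset.prod_congr rfl fun i _ =>
        (Set.indicator_of_mem (hy i (Set.mem_univ i)) ρ).symm
    · rw [Set.indicator_of_notMem hy]
      obtain ⟨i, hi⟩ : ∃ i, y i ∉ s i := by
        by_contra h
        push_neg at h
        exact hy fun i _ => h i
      exact (Finset.prod_eq_zero (Finset.mem_univ i) (Set.indicator_of_notMem hi ρ)).symm
  rw [lintegral_congr hind,
    lintegral_pi_prod n ν' inferInstance (fun i => (s i).indicator ρ)
      (fun i => hρ.indicator (hs i))]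
  refine Finset.prod_congr rfl fun i _ => ?_
  rw [lintegral_indicator (hs i), ← withDensity_apply _ (hs i), hd]


/-- The importance-sampling weight as a function of the sequence and the count. -/
noncomputable def wt (lam t a b σ μ : ℝ) (p : (ℕ → ℝ) × ℕ) : ℝ :=
  Real.exp (lam * t * (Real.exp a - 1) - a * p.2) *
    Real.exp (b^2 / (2 * σ^2) * p.2) *
    Real.exp (-(b / σ^2) * ∑ i ∈ Finset.range p.2, (p.1 i - μ))

lemma wt_nonneg (lam t a b σ μ : ℝ) (p : (ℕ → ℝ) × ℕ) : 0 ≤ wt lam t a b σ μ p := by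
  unfold wt; positivity

lemma measurable_wt (lam t a b σ μ : ℝ) : Measurable (wt lam t a b σ μ) := by
  apply measurable_from_prod_countable_left
  intro n
  simp only [wt]
  exact (measurable_const.mul measurable_const).mul
    (Real.measurable_exp.comp ((Finset.measurable_sum _ fun i _ =>
      (measurable_pi_apply (X := fun _ : ℕ => ℝ) i).sub_const μ).const_mul _))

def Bset (D : ℝ) (n : ℕ) : Set (ℕ → ℝ) := {y | D ≤ ∑ i ∈ Finset.range n, Real.exp (y i)}

lemma measurableSet_Bset (D : ℝ) (n : ℕ) : MeasurableSet (Bset D n) :=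
  measurableSet_le measurable_const
    (Finset.measurable_sum _ fun i _ => Real.measurable_exp.comp (measurable_pi_apply i))

def Aset (D : ℝ) (n : ℕ) : Set (Fin n → ℝ) := {z | D ≤ ∑ i, Real.exp (z i)}

lemma measurableSet_Aset (D : ℝ) (n : ℕ) : MeasurableSet (Aset D n) :=
  measurableSet_le measurable_const
    (Finset.measurable_sum _ fun i _ => Real.measurable_exp.comp (measurable_pi_apply i))

noncomputable def Cw (lam t a : ℝ) (n : ℕ) : ℝ≥0∞ :=
  ENNReal.ofReal (Real.exp (lam * t * (Real.exp a - 1) - a * n))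

noncomputable def Fw (lam t a b σ μ D : ℝ) (p : (ℕ → ℝ) × ℕ) : ℝ≥0∞ :=
  (Bset D p.2).indicator
    (fun y => Cw lam t a p.2 * ∏ i ∈ Finset.range p.2, tilt b σ μ (y i)) p.1

lemma measurable_Fw_right (lam t a b σ μ D : ℝ) (n : ℕ) :
    Measurable fun y : ℕ → ℝ => Fw lam t a b σ μ D (y, n) := by
  simp only [Fw]
  exact (measurable_const.mul (Finset.measurable_prod _ fun i _ =>
    (measurable_tilt b σ μ).comp (measurable_pi_apply i))).indicator (measurableSet_Bset D n)

lemma measurable_Fw (lam t a b σ μ D : ℝ) : Measurable (Fw lam t a b σ μ D) :=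
  measurable_from_prod_countable_left (measurable_Fw_right lam t a b σ μ D)

/-- the weight factorizes into the Poisson part and a product of per-coordinate tilts -/
lemma ofReal_wt (lam t a b σ μ : ℝ) (n : ℕ) (y : ℕ → ℝ) :
    ENNReal.ofReal (wt lam t a b σ μ (y, n))
      = Cw lam t a n * ∏ i ∈ Finset.range n, tilt b σ μ (y i) := by
  unfold wt Cw tilt
  rw [← ENNReal.ofReal_prod_of_nonneg (fun i _ => (Real.exp_pos _).le),
    ← ENNReal.ofReal_mul (Real.exp_pos _).le]
  congr 1
  rw [mul_assoc]
  congr 1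
  rw [← Real.exp_sum, ← Real.exp_add]
  congr 1
  simp only [Finset.sum_sub_distrib, Finset.sum_const, Finset.card_range, ← Finset.mul_sum,
    nsmul_eq_mul]
  ring

lemma poisson_tilt {lam t : ℝ} (hlt : 0 < lam * t) (a : ℝ) (n : ℕ) :
    Cw lam t a n * poissonMeasure (lam * t * Real.exp a).toNNReal {n}
      = poissonMeasure (lam * t).toNNReal {n} := by
  rw [poissonMeasure_singleton, poissonMeasure_singleton]
  have hp : ∀ r : NNReal, ENNReal.ofReal (Real.exp (-r) * r ^ n / n.factorial)
      = ENNReal.ofReal (poissonPMFReal r n) := fun r => rfl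
  rw [hp, hp, Cw, ← ENNReal.ofReal_mul (Real.exp_pos _).le]
  congr 1
  have hr' : (((lam * t * Real.exp a).toNNReal : NNReal) : ℝ) = lam * t * Real.exp a :=
    Real.coe_toNNReal _ (by positivity)
  have hr : (((lam * t).toNNReal : NNReal) : ℝ) = lam * t := Real.coe_toNNReal _ hlt.le
  unfold poissonPMFReal
  rw [hr', hr]
  have hpow : (lam * t * Real.exp a) ^ n = (lam * t) ^ n * Real.exp (a * n) := by
    rw [mul_pow]
    congr 1
    rw [← Real.exp_nat_mul]
    congr 1
    ring
  rw [hpow]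
  have hexp : Real.exp (lam * t * (Real.exp a - 1) - a * n) *
      (Real.exp (-(lam * t * Real.exp a)) * Real.exp (a * n)) = Real.exp (-(lam * t)) := by
    rw [← Real.exp_add, ← Real.exp_add]
    congr 1
    ring
  have hfac : (0:ℝ) < n.factorial := by positivity
  field_simp
  linear_combination hexp

end LogIS
/-- Unbiasedness of the lognormal importance-sampling estimator.
`L = Σ_{i<N} exp(Y_i)` with `N ~ Poisson(λt)` and `Y_i` i.i.d. `N(μ,σ²)`, independent of
`N`; `L' = Σ_{i<N'} exp(Y'_i)` with `N' ~ Poisson(λt·e^a)` and `Y'_i` i.i.d. `N(μ+b,σ²)`,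
independent of `N'`. Then
`E[ I(L' ≥ D)·exp(λt(e^a−1) − aN')·exp((b²/2σ²)N')·exp(−(b/σ²)Σ(Y'_i−μ)) ] = P(L ≥ D)`. -/
theorem lognormal_IS_unbiased
    {Ω : Type*} [MeasurableSpace Ω] (P : Measure Ω) [IsProbabilityMeasure P]
    (lam t : ℝ) (hlam : 0 < lam) (ht : 0 < t) (μ σ : ℝ) (hσ : 0 < σ)
    (a b : ℝ) (D : ℝ)
    (N N' : Ω → ℕ) (Y Y' : ℕ → Ω → ℝ)
    (hNmeas : Measurable N) (hN'meas : Measurable N')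
    (hYmeas : ∀ i, Measurable (Y i)) (hY'meas : ∀ i, Measurable (Y' i))
    (hNlaw : P.map N = poissonMeasure (lam * t).toNNReal)
    (hN'law : P.map N' = poissonMeasure (lam * t * Real.exp a).toNNReal)
    (hYlaw : ∀ i, P.map (Y i) = gaussianReal μ (σ^2).toNNReal)
    (hY'law : ∀ i, P.map (Y' i) = gaussianReal (μ + b) (σ^2).toNNReal)
    (hYindep : iIndepFun Y P)
    (hY'indep : iIndepFun Y' P)
    (hNY : IndepFun N (fun ω i => Y i ω : Ω → ℕ → ℝ) P)
    (hN'Y' : IndepFun N' (fun ω i => Y' i ω : Ω → ℕ → ℝ) P)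
    (L L' : Ω → ℝ)
    (hL : ∀ ω, L ω = ∑ i ∈ Finset.range (N ω), Real.exp (Y i ω))
    (hL' : ∀ ω, L' ω = ∑ i ∈ Finset.range (N' ω), Real.exp (Y' i ω)) :
    ∫ ω in {ω | D ≤ L' ω},
        Real.exp (lam * t * (Real.exp a - 1) - a * N' ω) *
          Real.exp ((b^2 / (2 * σ^2)) * N' ω) *
          Real.exp (-(b / σ^2) * ∑ i ∈ Finset.range (N' ω), (Y' i ω - μ)) ∂P
      = (P {ω | D ≤ L ω}).toReal := by
  classical
  have hlt : 0 < lam * t := mul_pos hlam ht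
  -- notation
  set ν' : Measure ℝ := gaussianReal (μ + b) (σ^2).toNNReal with hν'
  set ν : Measure ℝ := gaussianReal μ (σ^2).toNNReal with hν
  have hYvmeas : Measurable (fun ω i => Y' i ω : Ω → ℕ → ℝ) :=
    measurable_pi_lambda _ fun i => hY'meas i
  have hYvmeas0 : Measurable (fun ω i => Y i ω : Ω → ℕ → ℝ) :=
    measurable_pi_lambda _ fun i => hYmeas i
  have hΦmeas : Measurable (fun ω => ((fun i => Y' i ω), N' ω) : Ω → (ℕ → ℝ) × ℕ) :=
    hYvmeas.prodMk hN'meas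
  haveI : IsProbabilityMeasure (P.map (fun ω i => Y' i ω : Ω → ℕ → ℝ)) :=
    Measure.isProbabilityMeasure_map hYvmeas.aemeasurable
  -- measurability of L'
  have hL'meas : Measurable L' := by
    have h0 : Measurable fun p : (ℕ → ℝ) × ℕ => ∑ i ∈ Finset.range p.2, Real.exp (p.1 i) :=
      measurable_from_prod_countable_left fun n => by
        exact Finset.measurable_sum (Finset.range n) fun i _ => (measurable_pi_apply i).exp
    have h2 : L' = fun ω => (fun p : (ℕ → ℝ) × ℕ =>
        ∑ i ∈ Finset.range p.2, Real.exp (p.1 i)) ((fun i => Y' i ω), N' ω) := by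
      funext ω; exact hL' ω
    rw [h2]; exact h0.comp hΦmeas
  have hS : MeasurableSet {ω | D ≤ L' ω} := measurableSet_le measurable_const hL'meas
  -- Step 1 : Bochner integral to lintegral
  show ∫ ω in {ω | D ≤ L' ω}, LogIS.wt lam t a b σ μ ((fun i => Y' i ω), N' ω) ∂P
      = (P {ω | D ≤ L ω}).toReal
  rw [integral_eq_lintegral_of_nonneg_ae
    (Filter.Eventually.of_forall fun ω => LogIS.wt_nonneg lam t a b σ μ _)
    ((LogIS.measurable_wt lam t a b σ μ).comp hΦmeas).aestronglyMeasurable]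
  congr 1
  -- Step 2 : insert the indicator
  rw [← lintegral_indicator hS]
  have hind : ∀ ω, {ω | D ≤ L' ω}.indicator
      (fun ω => ENNReal.ofReal (LogIS.wt lam t a b σ μ ((fun i => Y' i ω), N' ω))) ω
        = LogIS.Fw lam t a b σ μ D ((fun i => Y' i ω), N' ω) := by
    intro ω
    have hiff : ω ∈ {ω | D ≤ L' ω} ↔ (fun i => Y' i ω) ∈ LogIS.Bset D (N' ω) := by
      simp only [Set.mem_setOf_eq, LogIS.Bset, hL' ω]
    by_cases hω : ω ∈ {ω | D ≤ L' ω}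
    · rw [Set.indicator_of_mem hω]
      unfold LogIS.Fw
      rw [Set.indicator_of_mem (hiff.mp hω)]
      exact LogIS.ofReal_wt lam t a b σ μ (N' ω) _
    · rw [Set.indicator_of_notMem hω]
      unfold LogIS.Fw
      rw [Set.indicator_of_notMem (fun h => hω (hiff.mpr h))]
  rw [lintegral_congr hind]
  -- Step 3 : push to the joint law and disintegrate
  have hmap : P.map (fun ω => ((fun i => Y' i ω), N' ω)) =
      (P.map (fun ω i => Y' i ω : Ω → ℕ → ℝ)).prod (P.map N') :=
    (indepFun_iff_map_prod_eq_prod_map_map hYvmeas.aemeasurable hN'meas.aemeasurable).mp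
      hN'Y'.symm
  rw [← lintegral_map (LogIS.measurable_Fw lam t a b σ μ D) hΦmeas, hmap,
    lintegral_prod_symm _ (LogIS.measurable_Fw lam t a b σ μ D).aemeasurable, hN'law,
    lintegral_countable']
  -- Step 4 : per-n computation
  have key : ∀ n : ℕ, ∫⁻ y, LogIS.Fw lam t a b σ μ D (y, n)
        ∂(P.map (fun ω i => Y' i ω : Ω → ℕ → ℝ))
      = LogIS.Cw lam t a n * P {ω | D ≤ ∑ i ∈ Finset.range n, Real.exp (Y i ω)} := by
    intro n
    have hGmeas : Measurable ((LogIS.Aset D n).indicator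
        (fun z : Fin n → ℝ => LogIS.Cw lam t a n * ∏ i, LogIS.tilt b σ μ (z i))) :=
      (measurable_const.mul (Finset.measurable_prod _ fun i _ =>
        (LogIS.measurable_tilt b σ μ).comp (measurable_pi_apply i))).indicator
        (LogIS.measurableSet_Aset D n)
    have hπ : Measurable (fun y : ℕ → ℝ => fun i : Fin n => y i) :=
      measurable_pi_lambda _ fun i => measurable_pi_apply _
    have hFG : ∀ y : ℕ → ℝ, LogIS.Fw lam t a b σ μ D (y, n)
        = (LogIS.Aset D n).indicator
            (fun z : Fin n → ℝ => LogIS.Cw lam t a n * ∏ i, LogIS.tilt b σ μ (z i))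
            (fun i : Fin n => y i) := by
      intro y
      have hmem : y ∈ LogIS.Bset D n ↔ (fun i : Fin n => y (i : ℕ)) ∈ LogIS.Aset D n := by
        simp only [LogIS.Bset, LogIS.Aset, Set.mem_setOf_eq,
          Fin.sum_univ_eq_sum_range (fun i => Real.exp (y i)) n]
      unfold LogIS.Fw
      by_cases hy : y ∈ LogIS.Bset D n
      · rw [Set.indicator_of_mem hy, Set.indicator_of_mem (hmem.mp hy)]
        congr 1
        exact (Fin.prod_univ_eq_prod_range (fun i => LogIS.tilt b σ μ (y i)) n).symm
      · rw [Set.indicator_of_notMem hy, Set.indicator_of_notMem (fun h => hy (hmem.mpr h))]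
    rw [lintegral_congr hFG,
      ← lintegral_map hGmeas hπ, Measure.map_map hπ hYvmeas]
    have hcomp : ((fun y : ℕ → ℝ => fun i : Fin n => y i) ∘ (fun ω i => Y' i ω))
        = fun ω => fun i : Fin n => Y' i ω := rfl
    rw [hcomp, LogIS.map_fin_pi P Y' hY'meas hY'indep ν' (fun i => hY'law i) n]
    have hindC : ∀ z : Fin n → ℝ, (LogIS.Aset D n).indicator
        (fun z : Fin n → ℝ => LogIS.Cw lam t a n * ∏ i, LogIS.tilt b σ μ (z i)) z
          = LogIS.Cw lam t a n *
            (LogIS.Aset D n).indicator (fun z : Fin n → ℝ => ∏ i, LogIS.tilt b σ μ (z i)) z := by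
      intro z
      by_cases hz : z ∈ LogIS.Aset D n <;>
        simp [hz, Set.indicator_of_mem, Set.indicator_of_notMem]
    have hprod : Measurable fun z : Fin n → ℝ => ∏ i, LogIS.tilt b σ μ (z i) := by
      exact Finset.measurable_prod _ fun i _ =>
        (LogIS.measurable_tilt b σ μ).comp (measurable_pi_apply i)
    rw [lintegral_congr hindC,
      lintegral_const_mul _ (hprod.indicator (LogIS.measurableSet_Aset D n)),
      lintegral_indicator (LogIS.measurableSet_Aset D n),
      ← withDensity_apply _ (LogIS.measurableSet_Aset D n),
      LogIS.pi_withDensity_prod n ν' ν (LogIS.tilt b σ μ) (LogIS.measurable_tilt b σ μ)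
        (LogIS.gaussian_tilt hσ μ b),
      ← LogIS.map_fin_pi P Y hYmeas hYindep ν (fun i => hYlaw i) n,
      Measure.map_apply (f := fun ω => fun i : Fin n => Y (i : ℕ) ω)
        (measurable_pi_lambda _ fun i => hYmeas i) (LogIS.measurableSet_Aset D n)]
    congr 2
    ext ω
    simp only [Set.mem_preimage, LogIS.Aset, Set.mem_setOf_eq,
      Fin.sum_univ_eq_sum_range (fun i => Real.exp (Y i ω)) n]
  -- Step 5 : identify the sums
  have hsum : (∑' n : ℕ, (∫⁻ y, LogIS.Fw lam t a b σ μ D (y, n)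
        ∂(P.map (fun ω i => Y' i ω : Ω → ℕ → ℝ)))
        * poissonMeasure (lam * t * Real.exp a).toNNReal {n})
      = ∑' n : ℕ, poissonMeasure (lam * t).toNNReal {n}
          * P {ω | D ≤ ∑ i ∈ Finset.range n, Real.exp (Y i ω)} := by
    refine tsum_congr fun n => ?_
    rw [key n, mul_right_comm, LogIS.poisson_tilt hlt a n]
  rw [hsum]
  -- Step 6 : decompose the right-hand side probability
  have hdecomp : {ω | D ≤ L ω} = ⋃ n, (N ⁻¹' {n} ∩ (fun ω i => Y i ω) ⁻¹' LogIS.Bset D n) := by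
    ext ω
    simp only [Set.mem_setOf_eq, Set.mem_iUnion, Set.mem_inter_iff, Set.mem_preimage,
      Set.mem_singleton_iff, LogIS.Bset]
    constructor
    · intro h
      exact ⟨N ω, rfl, by rw [hL ω] at h; exact h⟩
    · rintro ⟨n, hn, h⟩
      rw [hL ω, hn]
      exact h
  rw [hdecomp, measure_iUnion ?hdisj ?hmeasU]
  case hdisj =>
    intro m n hmn
    refine Set.disjoint_left.mpr ?_
    rintro ω ⟨h1, -⟩ ⟨h2, -⟩
    exact hmn (h1.symm.trans h2)
  case hmeasU =>
    intro n
    exact (hNmeas (measurableSet_singleton n)).inter (hYvmeas0 (LogIS.measurableSet_Bset D n))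
  refine tsum_congr fun n => ?_
  rw [hNY.measure_inter_preimage_eq_mul {n} (LogIS.Bset D n) (measurableSet_singleton n)
    (LogIS.measurableSet_Bset D n),
    ← Measure.map_apply hNmeas (measurableSet_singleton n), hNlaw]
  congr 1
end
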